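/- arXiv:2505.22770 — 4 statements merged into one kernel-verified Lean document; each statement's English description precedes it below -/
import Mathlib

section
/- Let Λ = R ⊗_k kQ, where R is a finite dimensional local commutative k-algebra and Q is an acyclic quiver. For kQ-modules M and N, the induced module Λ⊗_{kQ}N lies in Gen(Λ⊗_{kQ}M) (i.e., is a quotient of a finite direct sum of copies of Λ⊗_{kQ}M) if and only if N lies in Gen(M). -/
open TensorProduct LinearMap

set_option maxHeartbeats 1000000
set_option synthInstance.maxHeartbeats 400000

noncomputable section

section Basic
variable (A : Type) [Ring A]

/-- Every `A`-linear map from `M` to `N` is zero, i.e. `Hom_A(M,N) = 0`. -/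
def HomZero (M N : Type) [AddCommGroup M] [Module A M] [AddCommGroup N] [Module A N] : Prop :=
  ∀ f : M →ₗ[A] N, f = 0

/-- `Ext¹_A(M, N) = 0`: every short exact sequence `0 → N → E → M → 0` of `A`-modules
splits. -/
def Ext1Vanishes (M N : Type) [AddCommGroup M] [Module A M] [AddCommGroup N] [Module A N] :
    Prop :=
  ∀ (E : Type) [AddCommGroup E] [Module A E], ∀ (i : N →ₗ[A] E) (p : E →ₗ[A] M),
    Function.Injective i → Function.Surjective p → LinearMap.range i = LinearMap.ker p →
    ∃ s : M →ₗ[A] E, p ∘ₗ s = LinearMap.id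

/-- `N` is generated by `M`: `N` is a quotient of a finite direct sum of copies of `M`. -/
def GenBy (M N : Type) [AddCommGroup M] [Module A M] [AddCommGroup N] [Module A N] : Prop :=
  ∃ (n : ℕ) (p : (Fin n → M) →ₗ[A] N), Function.Surjective p

/-- `M` is an indecomposable `A`-module: it is nonzero and its only idempotent
endomorphisms are `0` and the identity. -/
def IndecomposableMod (M : Type) [AddCommGroup M] [Module A M] : Prop :=
  Nontrivial M ∧ ∀ e : M →ₗ[A] M, e ∘ₗ e = e → e = 0 ∨ e = LinearMap.id

/-- A surjection from a projective module with projective kernel. -/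
structure ProjPresentation1 (M : Type) [AddCommGroup M] [Module A M] where
  P : Type
  [acg : AddCommGroup P]
  [mod : Module A P]
  proj : Module.Projective A P
  p : P →ₗ[A] M
  surj : Function.Surjective p
  ker_proj : Module.Projective A (LinearMap.ker p)

attribute [instance] ProjPresentation1.acg ProjPresentation1.mod

/-- `M` has projective dimension at most one over `A`. -/
def PdLE1 (M : Type) [AddCommGroup M] [Module A M] : Prop :=
  Nonempty (ProjPresentation1 A M)

end Basic

section Tensor
variable (k : Type) [Field k] (R : Type) [CommRing R] [Algebra k R]
  (B : Type) [Ring B] [Algebra k B]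
variable (M : Type) [AddCommGroup M] [Module k M] [Module B M] [IsScalarTower k B M]

/-- The action of `b : B` on `M`, as a `k`-linear map. -/
def actB (b : B) : M →ₗ[k] M where
  toFun m := b • m
  map_add' := smul_add b
  map_smul' c m := by
    simp only [RingHom.id_apply]
    rw [← IsScalarTower.algebraMap_smul B c m, ← mul_smul, ← Algebra.commutes,
      mul_smul, IsScalarTower.algebraMap_smul]

/-- `B` acts on `R ⊗[k] M` through the second factor. -/
def toEndB : B →+* Module.End k (R ⊗[k] M) where
  toFun b := LinearMap.lTensor R (actB k B M b)
  map_one' := by ext x m; simp [actB]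
  map_mul' b b' := by ext x m; simp [actB, mul_smul]
  map_zero' := by ext x m; simp [actB, TensorProduct.tmul_zero]
  map_add' b b' := by ext x m; simp [actB, add_smul, TensorProduct.tmul_add]

def moduleBInd : Module B (R ⊗[k] M) := Module.compHom _ (toEndB k R B M)

def towerInd : @IsScalarTower k B (R ⊗[k] M) _ (moduleBInd k R B M).toSMul _ := by
  letI := moduleBInd k R B M
  constructor
  intro c b x
  show toEndB k R B M (c • b) x = c • toEndB k R B M b x
  induction x using TensorProduct.induction_on with
  | zero => rw [map_zero, map_zero]; exact (smul_zero c).symm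
  | tmul r m =>
      show r ⊗ₜ[k] ((c • b) • m) = c • (r ⊗ₜ[k] (b • m))
      rw [smul_assoc, TensorProduct.tmul_smul]
  | add x y hx hy => simp only [map_add, smul_add, hx, hy]

def smulCommInd : @SMulCommClass R B (R ⊗[k] M) _ (moduleBInd k R B M).toSMul := by
  letI := moduleBInd k R B M
  constructor
  intro r b x
  induction x using TensorProduct.induction_on with
  | zero => simp
  | tmul s m =>
      show r • (b • (s ⊗ₜ[k] m)) = b • (r • (s ⊗ₜ[k] m))
      rw [show b • (s ⊗ₜ[k] m) = s ⊗ₜ[k] (b • m) from rfl, TensorProduct.smul_tmul',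
        TensorProduct.smul_tmul', show b • ((r • s) ⊗ₜ[k] m) = (r • s) ⊗ₜ[k] (b • m) from rfl]
  | add x y hx hy => simp only [smul_add, hx, hy]

end Tensor

/-- The induced module `Λ ⊗_{kQ} M ≅ R ⊗[k] M`, as a type synonym carrying the
`Λ = R ⊗[k] B`-module structure combining the two factorwise actions. -/
@[nolint unusedArguments]
def Ind (k : Type) [Field k] (R : Type) [CommRing R] [Algebra k R]
    (B : Type) [Ring B] [Algebra k B]
    (M : Type) [AddCommGroup M] [Module k M] [Module B M] [IsScalarTower k B M] : Type :=
  R ⊗[k] M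

section Tensor2
variable (k : Type) [Field k] (R : Type) [CommRing R] [Algebra k R]
  (B : Type) [Ring B] [Algebra k B]
variable (M : Type) [AddCommGroup M] [Module k M] [Module B M] [IsScalarTower k B M]

instance : AddCommGroup (Ind k R B M) := inferInstanceAs (AddCommGroup (R ⊗[k] M))

instance : Module k (Ind k R B M) := inferInstanceAs (Module k (R ⊗[k] M))

instance : Module (R ⊗[k] B) (Ind k R B M) :=
  @TensorProduct.Algebra.module k R B (R ⊗[k] M) _ _ _ _ _ _ (moduleBInd k R B M) _ _ _
    (towerInd k R B M) (smulCommInd k R B M)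

instance : SMulCommClass (R ⊗[k] B) k (Ind k R B M) := by
  letI := moduleBInd k R B M
  haveI := towerInd k R B M
  haveI := smulCommInd k R B M
  constructor
  intro l c x
  show (TensorProduct.Algebra.moduleAux (R := k) (A := R) (B := B) (M := R ⊗[k] M) l)
        ((c • x : R ⊗[k] M))
      = c • (TensorProduct.Algebra.moduleAux (R := k) (A := R) (B := B) (M := R ⊗[k] M) l)
        (x : R ⊗[k] M)
  exact map_smul _ c x

instance : IsScalarTower k (R ⊗[k] B) (Ind k R B M) := by
  letI := moduleBInd k R B M
  haveI := towerInd k R B M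
  haveI := smulCommInd k R B M
  constructor
  intro c l x
  show (TensorProduct.Algebra.moduleAux (R := k) (A := R) (B := B) (M := R ⊗[k] M) (c • l))
        (x : R ⊗[k] M)
      = c • (TensorProduct.Algebra.moduleAux (R := k) (A := R) (B := B) (M := R ⊗[k] M) l)
        (x : R ⊗[k] M)
  rw [map_smul]
  rfl

end Tensor2


section Aux
variable (k : Type) [Field k] (R : Type) [CommRing R] [Algebra k R]
  (B : Type) [Ring B] [Algebra k B]
variable (M : Type) [AddCommGroup M] [Module k M] [Module B M] [IsScalarTower k B M]
variable (N : Type) [AddCommGroup N] [Module k N] [Module B N] [IsScalarTower k B N]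

lemma smul_comm_kB (c : k) (b : B) (m : M) : b • c • m = c • b • m := by
  rw [← IsScalarTower.algebraMap_smul B c m, ← mul_smul, ← Algebra.commutes,
    mul_smul, IsScalarTower.algebraMap_smul]

/-- Reducible coercion from `R ⊗[k] M` to the type synonym `Ind k R B M`. -/
abbrev toInd (x : R ⊗[k] M) : Ind k R B M := x

lemma ind_smul_tmul (r s : R) (b : B) (m : M) :
    (r ⊗ₜ[k] b) • toInd k R B M (s ⊗ₜ[k] m) = toInd k R B M ((r * s) ⊗ₜ[k] (b • m)) := by
  show r • (LinearMap.lTensor R (actB k B M b) (s ⊗ₜ[k] m)) = _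
  rw [LinearMap.lTensor_tmul]
  show (r • s) ⊗ₜ[k] (b • m) = _
  rw [smul_eq_mul]

/-- A `B`-linear map induces a `Λ`-linear map between induced modules. -/
def indMap (f : M →ₗ[B] N) : Ind k R B M →ₗ[R ⊗[k] B] Ind k R B N where
  toFun := LinearMap.lTensor R (f.restrictScalars k)
  map_add' := map_add _
  map_smul' l x := by
    simp only [RingHom.id_apply]
    induction l using TensorProduct.induction_on with
    | zero => erw [zero_smul, map_zero, zero_smul]; rfl
    | add l l' hl hl' => erw [add_smul, map_add, hl, hl', add_smul]; rfl
    | tmul r b =>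
      induction x using TensorProduct.induction_on with
      | zero => erw [show (r ⊗ₜ[k] b) • (0 : Ind k R B M) = 0 from smul_zero _, map_zero,
          show (r ⊗ₜ[k] b) • (0 : Ind k R B N) = 0 from smul_zero _]; rfl
      | add x y hx hy => erw [smul_add, map_add, hx, hy, map_add, smul_add]; rfl
      | tmul s m =>
        rw [ind_smul_tmul]
        show toInd k R B N ((r * s) ⊗ₜ[k] (f (b • m))) =
          (r ⊗ₜ[k] b) • toInd k R B N (s ⊗ₜ[k] (f m))
        rw [ind_smul_tmul, f.map_smul]

lemma indMap_tmul (f : M →ₗ[B] N) (r : R) (m : M) :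
    indMap k R B M N f (r ⊗ₜ[k] m) = r ⊗ₜ[k] (f m) :=
  LinearMap.lTensor_tmul R (f.restrictScalars k) r m

/-- Reduction `R ⊗[k] M → M` along an algebra map `φ : R → k`. -/
def resMap (φ : R →ₐ[k] k) : Ind k R B M →ₗ[k] M :=
  (TensorProduct.lid k M).toLinearMap ∘ₗ LinearMap.rTensor M φ.toLinearMap

lemma resMap_tmul (φ : R →ₐ[k] k) (r : R) (m : M) :
    resMap k R B M φ (r ⊗ₜ[k] m) = φ r • m := rfl

lemma resMap_smul (φ : R →ₐ[k] k) (r : R) (b : B) (x : Ind k R B M) :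
    resMap k R B M φ ((r ⊗ₜ[k] b : R ⊗[k] B) • x) = φ r • b • resMap k R B M φ x := by
  induction x using TensorProduct.induction_on with
  | zero => erw [show (r ⊗ₜ[k] b : R ⊗[k] B) • (0 : Ind k R B M) = 0 from smul_zero _, map_zero,
      smul_zero, smul_zero]
  | add x y hx hy => erw [smul_add, map_add, hx, hy, map_add, smul_add, smul_add]
  | tmul s m =>
    rw [ind_smul_tmul, resMap_tmul, resMap_tmul, map_mul, mul_smul,
      smul_comm_kB k B M (φ s) b m]

end Aux

/-- Let `Λ = R ⊗_k kQ`, with `R` a finite dimensional local commutative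
`k`-algebra and `kQ` the path algebra of an acyclic quiver (encoded as a finite
dimensional hereditary `k`-algebra `B` over the algebraically closed field `k`).
For `kQ`-modules `M`, `N`, the induced module `Λ ⊗_{kQ} N` lies in
`Gen (Λ ⊗_{kQ} M)` if and only if `N` lies in `Gen M`. -/
theorem stmt0
    (k : Type) [Field k] [IsAlgClosed k]
    (R : Type) [CommRing R] [Algebra k R] [IsLocalRing R] [FiniteDimensional k R]
    (B : Type) [Ring B] [Algebra k B] [FiniteDimensional k B]
    (hereditary : ∀ I : Submodule B B, Module.Projective B I)
    (M : Type) [AddCommGroup M] [Module k M] [Module B M] [IsScalarTower k B M]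
    [Module.Finite B M]
    (N : Type) [AddCommGroup N] [Module k N] [Module B N] [IsScalarTower k B N]
    [Module.Finite B N] :
    GenBy (R ⊗[k] B) (Ind k R B M) (Ind k R B N) ↔ GenBy B M N := by
  constructor
  · rintro ⟨n, q, hq⟩
    -- Build the residue algebra map `φ : R →ₐ[k] k`.
    letI : Field (R ⧸ IsLocalRing.maximalIdeal R) := Ideal.Quotient.field _
    haveI : Module.Finite k (R ⧸ IsLocalRing.maximalIdeal R) :=
      Module.Finite.of_surjective (Ideal.Quotient.mkₐ k (IsLocalRing.maximalIdeal R)).toLinearMap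
        (Ideal.Quotient.mkₐ_surjective k _)
    haveI : Algebra.IsAlgebraic k (R ⧸ IsLocalRing.maximalIdeal R) :=
      Algebra.IsAlgebraic.of_finite k _
    have hsurj : Function.Surjective (algebraMap k (R ⧸ IsLocalRing.maximalIdeal R)) :=
      IsAlgClosed.algebraMap_bijective_of_isIntegral.2
    let e : k ≃ₐ[k] (R ⧸ IsLocalRing.maximalIdeal R) :=
      AlgEquiv.ofBijective (Algebra.ofId k _) ⟨(algebraMap k _).injective, hsurj⟩
    let φ : R →ₐ[k] k :=
      (e.symm.toAlgHom).comp (Ideal.Quotient.mkₐ k (IsLocalRing.maximalIdeal R))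
    -- The induced `B`-linear map `p : M^n → N`.
    have hsm : ∀ (b : B) (v : Fin n → M),
        (fun i => toInd k R B M ((1:R) ⊗ₜ[k] (b • v) i))
          = ((1:R) ⊗ₜ[k] b) • fun i => toInd k R B M ((1:R) ⊗ₜ[k] v i) := by
      intro b v
      funext i
      simp only [Pi.smul_apply, ind_smul_tmul, one_mul]
    let p : (Fin n → M) →ₗ[B] N := {
      toFun := fun v => resMap k R B N φ (q fun i => toInd k R B M ((1:R) ⊗ₜ[k] v i))
      map_add' := fun v w => by
        show resMap k R B N φ (q fun i => toInd k R B M ((1:R) ⊗ₜ[k] (v + w) i))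
            = resMap k R B N φ (q fun i => toInd k R B M ((1:R) ⊗ₜ[k] v i))
              + resMap k R B N φ (q fun i => toInd k R B M ((1:R) ⊗ₜ[k] w i))
        have h : (fun i => toInd k R B M ((1:R) ⊗ₜ[k] (v + w) i))
            = (fun i => toInd k R B M ((1:R) ⊗ₜ[k] v i))
              + fun i => toInd k R B M ((1:R) ⊗ₜ[k] w i) := by
          funext i
          exact TensorProduct.tmul_add (1:R) (v i) (w i)
        rw [h, map_add, map_add]
      map_smul' := fun b v => by
        show resMap k R B N φ (q fun i => toInd k R B M ((1:R) ⊗ₜ[k] (b • v) i))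
            = b • resMap k R B N φ (q fun i => toInd k R B M ((1:R) ⊗ₜ[k] v i))
        rw [hsm b v, map_smul, resMap_smul, map_one, one_smul] }
    refine ⟨n, p, ?_⟩
    have key : ∀ (i : Fin n) (y : Ind k R B M),
        resMap k R B N φ (q (Pi.single i y)) ∈ LinearMap.range p := by
      intro i y
      induction y using TensorProduct.induction_on with
      | zero => erw [Pi.single_zero, map_zero, map_zero]; exact Submodule.zero_mem _
      | add y z hy hz =>
          erw [Pi.single_add, map_add, map_add]; exact Submodule.add_mem _ hy hz
      | tmul r m =>
          have h1 : Pi.single (M := fun _ => Ind k R B M) i (toInd k R B M (r ⊗ₜ[k] m))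
              = (r ⊗ₜ[k] (1:B))
                • Pi.single (M := fun _ => Ind k R B M) i (toInd k R B M ((1:R) ⊗ₜ[k] m)) := by
            funext j
            rcases eq_or_ne j i with rfl | hji
            · rw [Pi.smul_apply, Pi.single_eq_same, Pi.single_eq_same, ind_smul_tmul,
                mul_one, one_smul]
            · rw [Pi.smul_apply, Pi.single_eq_of_ne hji, Pi.single_eq_of_ne hji, smul_zero]
          have h2 : Pi.single (M := fun _ => Ind k R B M) i (toInd k R B M ((1:R) ⊗ₜ[k] m))
              = fun j => toInd k R B M ((1:R) ⊗ₜ[k] Pi.single (M := fun _ => M) i m j) := by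
            funext j
            rcases eq_or_ne j i with rfl | hji
            · rw [Pi.single_eq_same, Pi.single_eq_same]
            · rw [Pi.single_eq_of_ne hji, Pi.single_eq_of_ne hji, TensorProduct.tmul_zero]; rfl
          rw [h1, map_smul, resMap_smul, one_smul, h2]
          have h3 : resMap k R B N φ (q fun j => toInd k R B M ((1:R) ⊗ₜ[k] Pi.single (M := fun _ => M) i m j))
              = p (Pi.single (M := fun _ => M) i m) := rfl
          rw [h3]
          exact Submodule.smul_of_tower_mem _ (φ r) (LinearMap.mem_range_self p _)
    have hr : ∀ x : Fin n → Ind k R B M, resMap k R B N φ (q x) ∈ LinearMap.range p := by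
      intro x
      rw [← Finset.univ_sum_single x, map_sum, map_sum]
      exact Submodule.sum_mem _ fun i _ => key i (x i)
    intro n0
    obtain ⟨x, hx⟩ := hq (toInd k R B N ((1:R) ⊗ₜ[k] n0))
    have h := hr x
    rw [hx, resMap_tmul, map_one, one_smul] at h
    exact h
  · rintro ⟨n, p, hp⟩
    let P : Fin n → (M →ₗ[B] N) := fun i => p ∘ₗ LinearMap.single B (fun _ => M) i
    let q : (Fin n → Ind k R B M) →ₗ[R ⊗[k] B] Ind k R B N := {
      toFun := fun x => ∑ i, indMap k R B M N (P i) (x i)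
      map_add' := fun x y => by
        simp only [Pi.add_apply, map_add]
        exact Finset.sum_add_distrib
      map_smul' := fun l x => by
        simp only [RingHom.id_apply, Pi.smul_apply, map_smul]
        exact (Finset.smul_sum).symm }
    refine ⟨n, q, ?_⟩
    intro y
    induction y using TensorProduct.induction_on with
    | zero => exact ⟨0, map_zero q⟩
    | add y z hy hz =>
        obtain ⟨a, ha⟩ := hy
        obtain ⟨b, hb⟩ := hz
        exact ⟨a + b, by erw [map_add, ha, hb]; rfl⟩
    | tmul r n0 =>
        obtain ⟨v, hv⟩ := hp n0
        refine ⟨fun i => toInd k R B M (r ⊗ₜ[k] v i), ?_⟩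
        show ∑ i, indMap k R B M N (P i) (toInd k R B M (r ⊗ₜ[k] v i))
          = toInd k R B N (r ⊗ₜ[k] n0)
        calc ∑ i, indMap k R B M N (P i) (toInd k R B M (r ⊗ₜ[k] v i))
            = ∑ i, toInd k R B N (r ⊗ₜ[k] (p (Pi.single i (v i)))) :=
              Finset.sum_congr rfl fun i _ => indMap_tmul k R B M N (P i) r (v i)
          _ = toInd k R B N (r ⊗ₜ[k] (∑ i, p (Pi.single i (v i)))) :=
              (TensorProduct.tmul_sum _ _ _).symm
          _ = toInd k R B N (r ⊗ₜ[k] n0) := by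
              rw [← map_sum, Finset.univ_sum_single, hv]
end
end

section
/- Let RQ be the path algebra of an acyclic quiver Q over a commutative ring R. Every RQ-lattice (an RQ-module that is finitely generated projective over R) has projective dimension at most 1 as an RQ-module. -/
open TensorProduct LinearMap

set_option maxHeartbeats 1000000
set_option synthInstance.maxHeartbeats 400000

noncomputable section

section Path

/-- The element of `B` associated to a path: the product of the arrow elements, with
the vertex idempotent for the trivial path. -/
def pathElem {B V : Type} [Ring B] [Quiver.{1} V] (e : V → B)
    (ar : ∀ i j : V, (i ⟶ j) → B) : ∀ {i j : V}, Quiver.Path i j → B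
  | i, _, Quiver.Path.nil => e i
  | _, _, Quiver.Path.cons p a => ar _ _ a * pathElem e ar p

/-- A presentation of `B` as the path algebra of the quiver `V` over `K`: a complete
set of orthogonal idempotents indexed by the vertices and elements for the arrows,
such that the paths form a `K`-basis of `B`. -/
structure PathAlgebraPresentation (K : Type) [CommRing K] (B : Type) [Ring B] [Algebra K B]
    (V : Type) [Quiver.{1} V] [Fintype V] where
  e : V → B
  orth : ∀ i j : V, i ≠ j → e i * e j = 0
  idem : ∀ i : V, IsIdempotentElem (e i)
  sum_one : ∑ i : V, e i = 1
  arrow : ∀ i j : V, (i ⟶ j) → B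
  arrow_sandwich : ∀ (i j : V) (a : i ⟶ j), e j * arrow i j a * e i = arrow i j a
  basis : Module.Basis (Σ i j : V, Quiver.Path i j) K B
  basis_eq : ∀ p : Σ i j : V, Quiver.Path i j, basis p = pathElem e arrow p.2.2

end Path


namespace Stmt8

open TensorProduct

variable {R : Type} [CommRing R]
  {V : Type} [Quiver.{1} V] [Fintype V]
  {Λ : Type} [Ring Λ] [Algebra R Λ]
  {X : Type} [AddCommGroup X] [Module Λ X] [Module R X] [IsScalarTower R Λ X]

/-- The type of arrows of the quiver. -/
abbrev Arr (V : Type) [Quiver.{1} V] : Type 1 := Σ i : V, Σ j : V, i ⟶ j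

variable (pres : PathAlgebraPresentation R Λ V)

/-! ### Path algebra computations -/

lemma pe_nil (i : V) :
    pathElem pres.e pres.arrow (Quiver.Path.nil : Quiver.Path i i) = pres.e i := by
  rw [pathElem]

lemma pe_cons {i m j : V} (p : Quiver.Path i m) (a : m ⟶ j) :
    pathElem pres.e pres.arrow (p.cons a) = pres.arrow m j a * pathElem pres.e pres.arrow p := by
  rw [pathElem]

lemma e_mul_ar {i j : V} (a : i ⟶ j) : pres.e j * pres.arrow i j a = pres.arrow i j a := by
  have h := pres.arrow_sandwich i j a
  calc pres.e j * pres.arrow i j a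
      = pres.e j * (pres.e j * pres.arrow i j a * pres.e i) := by rw [h]
    _ = pres.e j * pres.e j * pres.arrow i j a * pres.e i := by rw [← mul_assoc, ← mul_assoc]
    _ = pres.e j * pres.arrow i j a * pres.e i := by rw [(pres.idem j).eq]
    _ = pres.arrow i j a := h

lemma ar_mul_e {i j : V} (a : i ⟶ j) : pres.arrow i j a * pres.e i = pres.arrow i j a := by
  have h := pres.arrow_sandwich i j a
  calc pres.arrow i j a * pres.e i
      = pres.e j * pres.arrow i j a * pres.e i * pres.e i := by rw [h]
    _ = pres.e j * pres.arrow i j a * (pres.e i * pres.e i) := by rw [mul_assoc]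
    _ = pres.e j * pres.arrow i j a * pres.e i := by rw [(pres.idem i).eq]
    _ = pres.arrow i j a := h

lemma pe_mul_e {i j : V} (p : Quiver.Path i j) :
    pathElem pres.e pres.arrow p * pres.e i = pathElem pres.e pres.arrow p := by
  induction p with
  | nil => rw [pe_nil]; exact (pres.idem i).eq
  | cons p a ih => rw [pe_cons, mul_assoc, ih]

lemma e_mul_pe {i j : V} (p : Quiver.Path i j) :
    pres.e j * pathElem pres.e pres.arrow p = pathElem pres.e pres.arrow p := by
  induction p with
  | nil => rw [pe_nil]; exact (pres.idem i).eq
  | cons p a _ => rw [pe_cons, ← mul_assoc, e_mul_ar]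

lemma pe_mul_e_ne {i j : V} (p : Quiver.Path i j) {k : V} (h : k ≠ i) :
    pathElem pres.e pres.arrow p * pres.e k = 0 := by
  rw [← pe_mul_e, mul_assoc, pres.orth i k (Ne.symm h), mul_zero]

lemma e_mul_pe_ne {i j : V} (p : Quiver.Path i j) {k : V} (h : k ≠ j) :
    pres.e k * pathElem pres.e pres.arrow p = 0 := by
  rw [← e_mul_pe, ← mul_assoc, pres.orth k j h, zero_mul]

lemma pe_comp {i j k : V} (p : Quiver.Path i j) (q : Quiver.Path j k) :
    pathElem pres.e pres.arrow (p.comp q)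
      = pathElem pres.e pres.arrow q * pathElem pres.e pres.arrow p := by
  induction q with
  | nil => rw [Quiver.Path.comp_nil, pe_nil, e_mul_pe]
  | cons q a ih => rw [Quiver.Path.comp_cons, pe_cons, pe_cons, ih, mul_assoc]

lemma pe_single_arrow {i j : V} (a : i ⟶ j) :
    pathElem pres.e pres.arrow (Quiver.Path.nil.cons a) = pres.arrow i j a := by
  rw [pe_cons, pe_nil, ar_mul_e]

/-! ### The linear maps -/

/-- Scalar action of `c : Λ` as an `R`-linear map. -/
def act (M : Type*) [AddCommGroup M] [Module R M] [Module Λ M] [IsScalarTower R Λ M]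
    (c : Λ) : M →ₗ[R] M where
  toFun x := c • x
  map_add' := smul_add c
  map_smul' r x := by
    dsimp only [RingHom.id_apply]
    rw [← algebraMap_smul Λ r x, smul_smul, ← Algebra.commutes, ← smul_smul,
      algebraMap_smul Λ r (c • x)]

@[simp] lemma act_apply (M : Type*) [AddCommGroup M] [Module R M] [Module Λ M]
    [IsScalarTower R Λ M] (c : Λ) (x : M) : act (R := R) M c x = c • x := rfl

/-- Lift of an `R`-linear map to a `Λ`-linear map on `Λ ⊗ X` (noncommutative base change). -/
def mylift {T' : Type} [AddCommGroup T'] [Module R T'] [Module Λ T'] [IsScalarTower R Λ T']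
    (g : X →ₗ[R] T') : Λ ⊗[R] X →ₗ[Λ] T' :=
  TensorProduct.AlgebraTensorModule.lift
    ((LinearMap.ringLmapEquivSelf Λ ℕ (X →ₗ[R] T')).symm g)

@[simp] lemma mylift_tmul {T' : Type} [AddCommGroup T'] [Module R T'] [Module Λ T']
    [IsScalarTower R Λ T'] (g : X →ₗ[R] T') (c : Λ) (x : X) :
    mylift g (c ⊗ₜ x) = c • g x := by
  simp [mylift]

/-- The multiplication map `Λ ⊗ X → X`. -/
def pmap (_pres : PathAlgebraPresentation R Λ V) : Λ ⊗[R] X →ₗ[Λ] X :=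
  mylift (LinearMap.id : X →ₗ[R] X)

@[simp] lemma pmap_tmul (c : Λ) (x : X) : pmap (X := X) pres (c ⊗ₜ x) = c • x := by
  simp [pmap]

/-- The `R`-linear section `x ↦ ∑ e i ⊗ e i x`. -/
def hmap : X →ₗ[R] Λ ⊗[R] X :=
  ∑ i : V, (TensorProduct.mk R Λ X (pres.e i)).comp (act (R := R) X (pres.e i))

lemma hmap_apply (x : X) :
    hmap (X := X) pres x = ∑ i : V, pres.e i ⊗ₜ (pres.e i • x) := by
  simp [hmap]

/-- The idempotent `λ ⊗ x ↦ ∑ λ eᵢ ⊗ eᵢ x` on `Λ ⊗ X`. -/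
def pimap : Λ ⊗[R] X →ₗ[Λ] Λ ⊗[R] X :=
  ∑ i : V, mylift ((TensorProduct.mk R Λ X (pres.e i)).comp (act (R := R) X (pres.e i)))

lemma pimap_tmul (c : Λ) (x : X) :
    pimap (X := X) pres (c ⊗ₜ x) = ∑ i : V, (c * pres.e i) ⊗ₜ (pres.e i • x) := by
  simp [pimap, TensorProduct.smul_tmul', smul_eq_mul]

lemma pimap_tmul_fix {c : Λ} {i : V} (hc : c * pres.e i = c) (x : X) :
    pimap (X := X) pres (c ⊗ₜ (pres.e i • x)) = c ⊗ₜ (pres.e i • x) := by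
  rw [pimap_tmul, Finset.sum_eq_single i]
  · rw [hc, smul_smul, (pres.idem i).eq]
  · intro k _ hk
    have h0 : c * pres.e k = 0 := by
      rw [← hc, mul_assoc, pres.orth i k (Ne.symm hk), mul_zero]
    rw [h0, TensorProduct.zero_tmul]
  · intro h; exact absurd (Finset.mem_univ i) h

/-- The components of the differential. -/
def dcomp (a : Arr V) : Λ ⊗[R] X →ₗ[Λ] Λ ⊗[R] X :=
  mylift (TensorProduct.mk R Λ X (pres.arrow a.1 a.2.1 a.2.2))
  - mylift ((TensorProduct.mk R Λ X 1).comp (act (R := R) X (pres.arrow a.1 a.2.1 a.2.2)))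

lemma dcomp_tmul (a : Arr V) (c : Λ) (x : X) :
    dcomp (X := X) pres a (c ⊗ₜ x)
      = (c * pres.arrow a.1 a.2.1 a.2.2) ⊗ₜ x - c ⊗ₜ (pres.arrow a.1 a.2.1 a.2.2 • x) := by
  simp [dcomp, TensorProduct.smul_tmul', smul_eq_mul]

/-- The differential `⊕ₐ Λ ⊗ X → Λ ⊗ X`. -/
def dmap : (Arr V →₀ Λ ⊗[R] X) →ₗ[Λ] Λ ⊗[R] X :=
  Finsupp.lsum ℕ fun a => dcomp (X := X) pres a

@[simp] lemma dmap_single (a : Arr V) (t : Λ ⊗[R] X) :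
    dmap (X := X) pres (Finsupp.single a t) = dcomp pres a t := by
  simp [dmap]

/-- Component of the idempotent in degree 1. -/
def pi1comp (a : Arr V) : Λ ⊗[R] X →ₗ[Λ] Λ ⊗[R] X :=
  mylift ((TensorProduct.mk R Λ X (pres.e a.2.1)).comp (act (R := R) X (pres.e a.1)))

lemma pi1comp_tmul (a : Arr V) (c : Λ) (x : X) :
    pi1comp (X := X) pres a (c ⊗ₜ x) = (c * pres.e a.2.1) ⊗ₜ (pres.e a.1 • x) := by
  simp [pi1comp, TensorProduct.smul_tmul', smul_eq_mul]

/-- The idempotent in degree 1. -/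
def pi1map : (Arr V →₀ Λ ⊗[R] X) →ₗ[Λ] (Arr V →₀ Λ ⊗[R] X) :=
  Finsupp.lsum ℕ fun a => (Finsupp.lsingle a).comp (pi1comp (X := X) pres a)

@[simp] lemma pi1map_single (a : Arr V) (t : Λ ⊗[R] X) :
    pi1map (X := X) pres (Finsupp.single a t) = Finsupp.single a (pi1comp pres a t) := by
  simp [pi1map]

end Stmt8
namespace Stmt8

open TensorProduct

variable {R : Type} [CommRing R]
  {V : Type} [Quiver.{1} V] [Fintype V]
  {Λ : Type} [Ring Λ] [Algebra R Λ]
  {X : Type} [AddCommGroup X] [Module Λ X] [Module R X] [IsScalarTower R Λ X]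

variable (pres : PathAlgebraPresentation R Λ V)

/-- The contracting homotopy, on a path. -/
def Sq : ∀ {i j : V}, Quiver.Path i j → (X →ₗ[R] (Arr V →₀ Λ ⊗[R] X))
  | _, _, Quiver.Path.nil => 0
  | _, _, @Quiver.Path.cons _ _ _ m j p a =>
      (Finsupp.lsingle (⟨m, j, a⟩ : Arr V)).comp
          ((TensorProduct.mk R Λ X (pres.e j)).comp
            (act (R := R) X (pathElem pres.e pres.arrow p)))
        + (act (R := R) ((Arr V) →₀ Λ ⊗[R] X) (pres.arrow m j a)).comp (Sq p)

@[simp] lemma Sq_nil (i : V) (x : X) :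
    Sq pres (Quiver.Path.nil : Quiver.Path i i) x = 0 := by
  rw [Sq]; rfl

lemma Sq_cons {i m j : V} (p : Quiver.Path i m) (a : m ⟶ j) (x : X) :
    Sq pres (p.cons a) x
      = Finsupp.single (⟨m, j, a⟩ : Arr V)
          (pres.e j ⊗ₜ (pathElem pres.e pres.arrow p • x))
        + pres.arrow m j a • Sq pres p x := by
  rw [Sq]; rfl

lemma e_smul_Sq {i j : V} (p : Quiver.Path i j) (x : X) :
    pres.e j • Sq pres p x = Sq pres p x := by
  induction p with
  | nil => simp
  | cons p a ih =>
    rw [Sq_cons, smul_add, Finsupp.smul_single, TensorProduct.smul_tmul', smul_eq_mul,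
      (pres.idem _).eq, smul_smul, e_mul_ar]

lemma Sq_comp {i j k : V} (p : Quiver.Path i j) (q : Quiver.Path j k) (x : X) :
    Sq pres (p.comp q) x
      = Sq pres q (pathElem pres.e pres.arrow p • x)
        + pathElem pres.e pres.arrow q • Sq pres p x := by
  induction q with
  | nil => rw [Quiver.Path.comp_nil, pe_nil, Sq_nil, zero_add, e_smul_Sq]
  | cons q a ih =>
    rw [Quiver.Path.comp_cons, Sq_cons, Sq_cons, ih, pe_comp, pe_cons, mul_smul,
      mul_smul, smul_add, add_assoc]

lemma dmap_Sq {i j : V} (q : Quiver.Path i j) (x : X) :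
    dmap pres (Sq pres q x)
      = pathElem pres.e pres.arrow q ⊗ₜ (pres.e i • x)
        - pres.e j ⊗ₜ (pathElem pres.e pres.arrow q • x) := by
  induction q with
  | nil => rw [Sq_nil, map_zero, pe_nil, sub_self]
  | cons q a ih =>
    rw [Sq_cons, map_add, dmap_single, dcomp_tmul, map_smul, ih, smul_sub,
      TensorProduct.smul_tmul', TensorProduct.smul_tmul', smul_eq_mul, smul_eq_mul,
      e_mul_ar, ar_mul_e, pe_cons, mul_smul]
    dsimp only
    abel

lemma pi1map_Sq {i j : V} (q : Quiver.Path i j) (x : X) :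
    pi1map pres (Sq pres q x) = Sq pres q x := by
  induction q with
  | nil => simp
  | cons q a ih =>
    rw [Sq_cons, map_add, pi1map_single, pi1comp_tmul, map_smul, ih, (pres.idem _).eq,
      smul_smul, e_mul_pe]

/-- The contracting homotopy as an `R`-linear map on `Λ ⊗ X`. -/
def Smap : Λ ⊗[R] X →ₗ[R] (Arr V →₀ Λ ⊗[R] X) :=
  TensorProduct.lift (pres.basis.constr ℕ fun σ => Sq pres σ.2.2)

lemma Smap_pe_tmul {i j : V} (q : Quiver.Path i j) (x : X) :
    Smap pres (pathElem pres.e pres.arrow q ⊗ₜ x) = Sq pres q x := by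
  have hb : pathElem pres.e pres.arrow q = pres.basis ⟨i, j, q⟩ :=
    (pres.basis_eq ⟨i, j, q⟩).symm
  rw [hb, Smap, TensorProduct.lift.tmul, Module.Basis.constr_basis]

end Stmt8
namespace Stmt8

open TensorProduct

variable {R : Type} [CommRing R]
  {V : Type} [Quiver.{1} V] [Fintype V]
  {Λ : Type} [Ring Λ] [Algebra R Λ]
  {X : Type} [AddCommGroup X] [Module Λ X] [Module R X] [IsScalarTower R Λ X]

variable (pres : PathAlgebraPresentation R Λ V)

lemma pmap_dmap (u : Arr V →₀ Λ ⊗[R] X) : pmap pres (dmap pres u) = 0 := by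
  induction u using Finsupp.induction_linear with
  | zero => simp
  | add f g hf hg => rw [map_add, map_add, hf, hg, add_zero]
  | single a t =>
    rw [dmap_single]
    induction t with
    | zero => simp
    | tmul c x => rw [dcomp_tmul, map_sub, pmap_tmul, pmap_tmul, mul_smul, sub_self]
    | add s t hs ht => rw [map_add, map_add, hs, ht, add_zero]

lemma pmap_pimap (t : Λ ⊗[R] X) : pmap pres (pimap pres t) = pmap pres t := by
  induction t with
  | zero => simp
  | tmul c x =>
    rw [pimap_tmul, map_sum, pmap_tmul]
    have h : ∀ k ∈ Finset.univ, pmap pres ((c * pres.e k) ⊗ₜ (pres.e k • x))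
        = (c * pres.e k) • x := by
      intro k _
      rw [pmap_tmul, smul_smul, mul_assoc, (pres.idem k).eq]
    rw [Finset.sum_congr rfl h, ← Finset.sum_smul, ← Finset.mul_sum, pres.sum_one, mul_one]
  | add s t hs ht => simp only [map_add, hs, ht]

lemma pimap_pimap (t : Λ ⊗[R] X) : pimap pres (pimap pres t) = pimap pres t := by
  induction t with
  | zero => simp
  | tmul c x =>
    rw [pimap_tmul, map_sum]
    refine Finset.sum_congr rfl fun k _ => ?_
    exact pimap_tmul_fix pres (by rw [mul_assoc, (pres.idem k).eq]) x
  | add s t hs ht => rw [map_add, map_add, hs, ht]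

lemma pi1comp_pi1comp (a : Arr V) (t : Λ ⊗[R] X) :
    pi1comp pres a (pi1comp pres a t) = pi1comp pres a t := by
  induction t with
  | zero => simp
  | tmul c x =>
    rw [pi1comp_tmul, pi1comp_tmul, mul_assoc, (pres.idem _).eq, smul_smul, (pres.idem _).eq]
  | add s t hs ht => rw [map_add, map_add, hs, ht]

lemma pi1map_pi1map (u : Arr V →₀ Λ ⊗[R] X) :
    pi1map pres (pi1map pres u) = pi1map pres u := by
  induction u using Finsupp.induction_linear with
  | zero => simp
  | add f g hf hg => rw [map_add, map_add, hf, hg]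
  | single a t => rw [pi1map_single, pi1map_single, pi1comp_pi1comp]

lemma pimap_dmap_pi1map (u : Arr V →₀ Λ ⊗[R] X) :
    pimap pres (dmap pres (pi1map pres u)) = dmap pres (pi1map pres u) := by
  induction u using Finsupp.induction_linear with
  | zero => simp
  | add f g hf hg => rw [map_add, map_add, map_add, hf, hg]
  | single a t =>
    rw [pi1map_single, dmap_single]
    induction t with
    | zero => simp
    | tmul c x =>
      rw [pi1comp_tmul, dcomp_tmul, map_sub]
      have h1 : pimap pres ((c * pres.e a.2.1 * pres.arrow a.1 a.2.1 a.2.2) ⊗ₜ (pres.e a.1 • x))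
          = (c * pres.e a.2.1 * pres.arrow a.1 a.2.1 a.2.2) ⊗ₜ (pres.e a.1 • x) :=
        pimap_tmul_fix pres (by rw [mul_assoc, ar_mul_e]) x
      have h2 : pres.arrow a.1 a.2.1 a.2.2 • (pres.e a.1 • x)
          = pres.e a.2.1 • (pres.arrow a.1 a.2.1 a.2.2 • (pres.e a.1 • x)) := by
        rw [smul_smul (pres.e a.2.1), e_mul_ar]
      have h3 : pimap pres ((c * pres.e a.2.1) ⊗ₜ (pres.arrow a.1 a.2.1 a.2.2 • (pres.e a.1 • x)))
          = (c * pres.e a.2.1) ⊗ₜ (pres.arrow a.1 a.2.1 a.2.2 • (pres.e a.1 • x)) := by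
        rw [h2]
        exact pimap_tmul_fix pres (by rw [mul_assoc, (pres.idem _).eq]) _
      rw [h1, h3]
    | add s t hs ht => rw [map_add, map_add, map_add, hs, ht]

/-- Core computation for `S ∘ d = id` on the reduced degree-1 part. -/
lemma H2core (a : Arr V) {m l : V} (q : Quiver.Path m l) (x : X) :
    Smap pres (dmap pres (pi1map pres (Finsupp.single a (pathElem pres.e pres.arrow q ⊗ₜ x))))
      = pi1map pres (Finsupp.single a (pathElem pres.e pres.arrow q ⊗ₜ x)) := by
  obtain ⟨i, j, f⟩ := a
  rw [pi1map_single, pi1comp_tmul]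
  dsimp only
  by_cases hm : m = j
  · subst hm
    rw [pe_mul_e, dmap_single, dcomp_tmul]
    dsimp only
    have h1 : pathElem pres.e pres.arrow q * pres.arrow i m f
        = pathElem pres.e pres.arrow ((Quiver.Path.nil.cons f).comp q) := by
      rw [pe_comp, pe_single_arrow]
    rw [map_sub, h1, Smap_pe_tmul, Smap_pe_tmul, Sq_comp, pe_single_arrow]
    have h2 : Sq pres (Quiver.Path.nil.cons f) (pres.e i • x)
        = Finsupp.single (⟨i, m, f⟩ : Arr V) (pres.e m ⊗ₜ (pres.e i • x)) := by
      rw [Sq_cons, Sq_nil, smul_zero, add_zero, pe_nil, smul_smul, (pres.idem i).eq]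
    rw [h2, Finsupp.smul_single, TensorProduct.smul_tmul', smul_eq_mul, pe_mul_e]
    abel
  · rw [pe_mul_e_ne pres q (fun h => hm h.symm), TensorProduct.zero_tmul,
      Finsupp.single_zero, map_zero, map_zero]

lemma Smap_dmap_pi1map (u : Arr V →₀ Λ ⊗[R] X) :
    Smap pres (dmap pres (pi1map pres u)) = pi1map pres u := by
  have key : (Smap pres) ∘ₗ ((dmap (X := X) pres).restrictScalars R)
        ∘ₗ ((pi1map (X := X) pres).restrictScalars R)
      = (pi1map (X := X) pres).restrictScalars R := by
    apply Finsupp.lhom_ext'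
    intro a
    apply TensorProduct.ext
    apply pres.basis.ext
    intro σ
    apply LinearMap.ext
    intro x
    obtain ⟨i, j, q⟩ := σ
    simp only [LinearMap.compr₂ₛₗ_apply, TensorProduct.mk_apply, LinearMap.comp_apply,
      LinearMap.restrictScalars_apply, Finsupp.lsingle_apply]
    rw [pres.basis_eq]
    exact H2core pres a q x
  exact DFunLike.congr_fun key u

lemma pimap_pe_tmul {i j : V} (q : Quiver.Path i j) (x : X) :
    pimap pres (pathElem pres.e pres.arrow q ⊗ₜ x)
      = pathElem pres.e pres.arrow q ⊗ₜ (pres.e i • x) := by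
  rw [pimap_tmul, Finset.sum_eq_single i]
  · rw [pe_mul_e]
  · intro k _ hk
    rw [pe_mul_e_ne pres q hk, TensorProduct.zero_tmul]
  · intro h; exact absurd (Finset.mem_univ i) h

lemma hmap_pe_smul {i j : V} (q : Quiver.Path i j) (x : X) :
    hmap pres (pathElem pres.e pres.arrow q • x)
      = pres.e j ⊗ₜ (pathElem pres.e pres.arrow q • x) := by
  rw [hmap_apply, Finset.sum_eq_single j]
  · rw [smul_smul, e_mul_pe]
  · intro k _ hk
    rw [smul_smul, e_mul_pe_ne pres q hk, zero_smul, TensorProduct.tmul_zero]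
  · intro h; exact absurd (Finset.mem_univ j) h

lemma dmap_Smap_pimap (t : Λ ⊗[R] X) :
    dmap pres (Smap pres (pimap pres t))
      = pimap pres t - hmap pres (pmap pres (pimap pres t)) := by
  have key : ((dmap (X := X) pres).restrictScalars R) ∘ₗ (Smap pres)
        ∘ₗ ((pimap (X := X) pres).restrictScalars R)
      = (pimap (X := X) pres).restrictScalars R
        - (hmap pres) ∘ₗ ((pmap (X := X) pres).restrictScalars R)
          ∘ₗ ((pimap (X := X) pres).restrictScalars R) := by
    apply TensorProduct.ext
    apply pres.basis.ext
    intro σ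
    apply LinearMap.ext
    intro x
    obtain ⟨i, j, q⟩ := σ
    simp only [LinearMap.compr₂ₛₗ_apply, TensorProduct.mk_apply, LinearMap.comp_apply,
      LinearMap.restrictScalars_apply, LinearMap.sub_apply]
    rw [pres.basis_eq]
    dsimp only
    rw [pimap_pe_tmul, Smap_pe_tmul, dmap_Sq, pmap_tmul,
      smul_smul (pres.e i) (pres.e i), (pres.idem i).eq,
      smul_smul (pathElem pres.e pres.arrow q) (pres.e i), pe_mul_e, hmap_pe_smul]
  exact DFunLike.congr_fun key t

lemma pi1map_Smap (t : Λ ⊗[R] X) : pi1map pres (Smap pres t) = Smap pres t := by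
  have key : ((pi1map (X := X) pres).restrictScalars R) ∘ₗ (Smap pres) = Smap pres := by
    apply TensorProduct.ext
    apply pres.basis.ext
    intro σ
    apply LinearMap.ext
    intro x
    obtain ⟨i, j, q⟩ := σ
    simp only [LinearMap.compr₂ₛₗ_apply, TensorProduct.mk_apply, LinearMap.comp_apply,
      LinearMap.restrictScalars_apply]
    rw [pres.basis_eq]
    dsimp only
    rw [Smap_pe_tmul, pi1map_Sq]
  exact DFunLike.congr_fun key t

end Stmt8
namespace Stmt8

open TensorProduct

variable {R : Type} [CommRing R]
  {V : Type} [Quiver.{1} V] [Fintype V]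
  {Λ : Type} [Ring Λ] [Algebra R Λ]
  {X : Type} [AddCommGroup X] [Module Λ X] [Module R X] [IsScalarTower R Λ X]

variable (pres : PathAlgebraPresentation R Λ V)

/-- The range of an idempotent endomorphism of a projective module is projective. -/
lemma proj_of_idem {M : Type*} [AddCommGroup M] [Module Λ M] [Module.Projective Λ M]
    (f : M →ₗ[Λ] M) (hf : ∀ x, f (f x) = f x) :
    Module.Projective Λ (LinearMap.range f) := by
  refine Module.Projective.of_split (LinearMap.range f).subtype
    (f.codRestrict _ fun x => LinearMap.mem_range_self f x) ?_
  apply LinearMap.ext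
  rintro ⟨y, z, rfl⟩
  exact Subtype.ext (hf z)

lemma fix_of_mem_range_idem {M : Type*} [AddCommGroup M] [Module Λ M]
    (f : M →ₗ[Λ] M) (hf : ∀ x, f (f x) = f x) {u : M} (hu : u ∈ LinearMap.range f) :
    f u = u := by
  obtain ⟨v, rfl⟩ := hu
  exact hf v

end Stmt8

/-- Let `Λ = RQ` be the path algebra of a finite acyclic quiver `V` over a
commutative ring `R` (acyclicity encoded by the finiteness of the path types).  Every
`RQ`-lattice, i.e. every `Λ`-module which is finitely generated projective over `R`, has
projective dimension at most `1` over `Λ`. -/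
theorem stmt8
    (R : Type) [CommRing R]
    (V : Type) [Quiver.{1} V] [Fintype V]
    [∀ i j : V, Finite (Quiver.Path i j)]
    (Λ : Type) [Ring Λ] [Algebra R Λ]
    (pres : PathAlgebraPresentation R Λ V)
    (X : Type) [AddCommGroup X] [Module Λ X] [Module R X] [IsScalarTower R Λ X]
    (hfin : Module.Finite R X) (hproj : Module.Projective R X) :
    PdLE1 Λ X := by
  classical
  haveI := hproj
  haveI hT : Module.Projective Λ (Λ ⊗[R] X) := inferInstance
  haveI hT1 : Module.Projective Λ (Stmt8.Arr V →₀ Λ ⊗[R] X) :=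
    Module.Projective.of_equiv
      (finsuppLequivDFinsupp (ι := Stmt8.Arr V) (M := Λ ⊗[R] X) Λ).symm
  haveI hP0 : Module.Projective Λ ↥(LinearMap.range (Stmt8.pimap (X := X) pres)) :=
    Stmt8.proj_of_idem (Stmt8.pimap pres) (Stmt8.pimap_pimap pres)
  haveI hP1 : Module.Projective Λ ↥(LinearMap.range (Stmt8.pi1map (X := X) pres)) :=
    Stmt8.proj_of_idem (M := Stmt8.Arr V →₀ Λ ⊗[R] X) (Stmt8.pi1map pres) (Stmt8.pi1map_pi1map pres)
  set P0 : Submodule Λ (Λ ⊗[R] X) := LinearMap.range (Stmt8.pimap (X := X) pres) with hP0def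
  set p' : ↥P0 →ₗ[Λ] X := (Stmt8.pmap (X := X) pres) ∘ₗ P0.subtype with hp'def
  have hsurj : Function.Surjective p' := by
    intro x
    refine ⟨⟨Stmt8.pimap pres ((1 : Λ) ⊗ₜ x), LinearMap.mem_range_self _ _⟩, ?_⟩
    show Stmt8.pmap pres (Stmt8.pimap pres ((1 : Λ) ⊗ₜ x)) = x
    rw [Stmt8.pmap_pimap, Stmt8.pmap_tmul, one_smul]
  -- the map from the degree-1 part to the kernel
  have hmem : ∀ u : ↥(LinearMap.range (Stmt8.pi1map (X := X) pres)),
      Stmt8.dmap pres (u : Stmt8.Arr V →₀ Λ ⊗[R] X) ∈ P0 := by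
    rintro ⟨u, hu⟩
    have : Stmt8.pi1map pres u = u :=
      Stmt8.fix_of_mem_range_idem (M := Stmt8.Arr V →₀ Λ ⊗[R] X) (Stmt8.pi1map pres) (Stmt8.pi1map_pi1map pres) hu
    rw [show (⟨u, hu⟩ : ↥(LinearMap.range (Stmt8.pi1map (X := X) pres))).1 = u from rfl, ← this]
    exact ⟨Stmt8.dmap pres (Stmt8.pi1map pres u), Stmt8.pimap_dmap_pi1map pres u⟩
  set Φ₁ : ↥(LinearMap.range (Stmt8.pi1map (X := X) pres)) →ₗ[Λ] ↥P0 :=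
    LinearMap.codRestrict P0
      ((Stmt8.dmap pres) ∘ₗ (LinearMap.range (Stmt8.pi1map (X := X) pres)).subtype)
      hmem with hΦ₁def
  have hker : ∀ u, Φ₁ u ∈ LinearMap.ker p' := by
    intro u
    show p' (Φ₁ u) = 0
    show Stmt8.pmap pres (Stmt8.dmap pres u.1) = 0
    exact Stmt8.pmap_dmap pres u.1
  set Φ : ↥(LinearMap.range (Stmt8.pi1map (X := X) pres)) →ₗ[Λ] ↥(LinearMap.ker p') :=
    LinearMap.codRestrict (LinearMap.ker p') Φ₁ hker with hΦdef
  have hΦval : ∀ u, ((Φ u : ↥P0) : Λ ⊗[R] X) = Stmt8.dmap pres u.1 := fun u => rfl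
  have hfix1 : ∀ u : ↥(LinearMap.range (Stmt8.pi1map (X := X) pres)),
      Stmt8.pi1map pres u.1 = u.1 := fun u =>
    Stmt8.fix_of_mem_range_idem (M := Stmt8.Arr V →₀ Λ ⊗[R] X) (Stmt8.pi1map pres) (Stmt8.pi1map_pi1map pres) u.2
  have hinj : Function.Injective Φ := by
    intro u v huv
    have h1 : Stmt8.dmap pres u.1 = Stmt8.dmap pres v.1 := by
      rw [← hΦval u, ← hΦval v, huv]
    apply Subtype.ext
    calc u.1 = Stmt8.pi1map pres u.1 := (hfix1 u).symm
      _ = Stmt8.Smap pres (Stmt8.dmap pres (Stmt8.pi1map pres u.1)) :=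
            (Stmt8.Smap_dmap_pi1map pres u.1).symm
      _ = Stmt8.Smap pres (Stmt8.dmap pres u.1) := by rw [hfix1 u]
      _ = Stmt8.Smap pres (Stmt8.dmap pres (Stmt8.pi1map pres v.1)) := by rw [h1, hfix1 v]
      _ = Stmt8.pi1map pres v.1 := Stmt8.Smap_dmap_pi1map pres v.1
      _ = v.1 := hfix1 v
  have hsur : Function.Surjective Φ := by
    rintro ⟨⟨t, htP⟩, htk⟩
    have htk' : Stmt8.pmap pres t = 0 := htk
    have htfix : Stmt8.pimap pres t = t :=
      Stmt8.fix_of_mem_range_idem (Stmt8.pimap pres) (Stmt8.pimap_pimap pres) htP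
    refine ⟨⟨Stmt8.pi1map pres (Stmt8.Smap pres t), LinearMap.mem_range_self _ _⟩, ?_⟩
    apply Subtype.ext
    apply Subtype.ext
    show Stmt8.dmap pres (Stmt8.pi1map pres (Stmt8.Smap pres t)) = t
    rw [Stmt8.pi1map_Smap]
    calc Stmt8.dmap pres (Stmt8.Smap pres t)
        = Stmt8.dmap pres (Stmt8.Smap pres (Stmt8.pimap pres t)) := by rw [htfix]
      _ = Stmt8.pimap pres t - Stmt8.hmap pres (Stmt8.pmap pres (Stmt8.pimap pres t)) :=
            Stmt8.dmap_Smap_pimap pres t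
      _ = t := by rw [htfix, htk', map_zero, sub_zero]
  haveI hkerproj : Module.Projective Λ ↥(LinearMap.ker p') :=
    Module.Projective.of_equiv (LinearEquiv.ofBijective Φ ⟨hinj, hsur⟩)
  exact ⟨{ P := ↥P0, proj := hP0, p := p', surj := hsurj, ker_proj := hkerproj }⟩
end
end

section
/- Let A be a finite dimensional algebra and (M_1, …, M_r) a sequence of indecomposable A-modules such that: (i) pd M_i ≤ 1 for all i; (ii) Ext^1_A(M_i, M_i) = 0 for all i; (iii) Hom_A(M_i, M_j) = 0 = Ext^1_A(M_i, M_j) for all j < i. Then (M_1, …, M_r) is a τ-exceptional sequence: M_r is τ-rigid in mod A, and inductively (M_1, …, M_{r-1}) is a τ-exceptional sequence in the τ-perpendicular category J(M_r) = M_r^⊥ ∩ ^⊥(τ M_r). -/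
open TensorProduct LinearMap

set_option maxHeartbeats 1000000
set_option synthInstance.maxHeartbeats 400000

noncomputable section

section Seq
variable (A : Type) [Ring A]

/-- The finitely generated `A`-modules: the objects of `mod A`. -/
def fgMods : Set (ModuleCat.{0} A) := {X | Module.Finite A X}

/-- `M` is `τ_W`-rigid in the subcategory `W`, via the Auslander–Smalø
characterization: `Hom_W(M, τ_W M) = 0` iff every extension of `M` by a module of `W`
generated by `M` splits. -/
def TauRigidIn (W : Set (ModuleCat.{0} A)) (M : ModuleCat.{0} A) : Prop :=
  ∀ Y ∈ W, GenBy A M Y → Ext1Vanishes A M Y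

/-- The τ-perpendicular category `J_W(M) = M^⊥ ∩ ⊥(τ_W M)` inside `W`, with
`⊥(τ_W M)` expressed by the Auslander–Smalø formula. -/
def JPerp (W : Set (ModuleCat.{0} A)) (M : ModuleCat.{0} A) : Set (ModuleCat.{0} A) :=
  {Y | Y ∈ W ∧ HomZero A M Y ∧ ∀ Z ∈ W, GenBy A Y Z → Ext1Vanishes A M Z}

/-- τ-exceptional sequences of indecomposable modules inside `W`; here the list is in
*reverse* order, so the head of the list is the last module of the sequence. -/
def IsTauExcSeqRev (W : Set (ModuleCat.{0} A)) : List (ModuleCat.{0} A) → Prop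
  | [] => True
  | M :: tl => M ∈ W ∧ IndecomposableMod A M ∧ TauRigidIn A W M ∧
      IsTauExcSeqRev (JPerp A W M) tl

/-- `l` is a τ-exceptional sequence in `W` (written in the usual order, so that the
last module of the list is τ-rigid in `W` and the initial part is a τ-exceptional
sequence in its τ-perpendicular category). -/
def IsTauExcSeq (W : Set (ModuleCat.{0} A)) (l : List (ModuleCat.{0} A)) : Prop :=
  IsTauExcSeqRev A W l.reverse

end Seq



section KeyLemmas

variable {A : Type} [Ring A]

/-- The extension/lifting property of `N` relative to a surjection `π : P → X`:
every map `ker π → N` extends to `P`.  When `P` is projective this says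
`Ext¹(X, N) = 0`. -/
def ExtProp {P X : Type} [AddCommGroup P] [Module A P] [AddCommGroup X] [Module A X]
    (π : P →ₗ[A] X) (N : Type) [AddCommGroup N] [Module A N] : Prop :=
  ∀ g : (LinearMap.ker π : Submodule A P) →ₗ[A] N, ∃ g' : P →ₗ[A] N,
    ∀ c : (LinearMap.ker π : Submodule A P), g' c = g c

lemma extProp_of_ext1 {P X N : Type} [AddCommGroup P] [Module A P] [AddCommGroup X]
    [Module A X] [AddCommGroup N] [Module A N] (π : P →ₗ[A] X)
    (hπ : Function.Surjective π) (h : Ext1Vanishes A X N) : ExtProp π N := by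
  intro g
  let φ : (LinearMap.ker π : Submodule A P) →ₗ[A] P × N :=
    LinearMap.prod (LinearMap.ker π).subtype (-g)
  let S : Submodule A (P × N) := LinearMap.range φ
  let j : N →ₗ[A] ((P × N) ⧸ S) := S.mkQ ∘ₗ LinearMap.inr A P N
  have hq0 : S ≤ LinearMap.ker (π ∘ₗ LinearMap.fst A P N) := by
    rintro _ ⟨c, rfl⟩
    have hc : π (c : P) = 0 := c.2
    simp [φ, hc]
  let q : ((P × N) ⧸ S) →ₗ[A] X := S.liftQ (π ∘ₗ LinearMap.fst A P N) hq0
  have hjinj : Function.Injective j := by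
    intro y₁ y₂ hy
    have hj0 : j (y₁ - y₂) = 0 := by rw [map_sub, hy, sub_self]
    have hmm : ((0 : P), y₁ - y₂) ∈ S := by
      rw [← Submodule.Quotient.mk_eq_zero S]
      exact hj0
    obtain ⟨c, hc⟩ := hmm
    have hc1 : (c : P) = 0 := congrArg Prod.fst hc
    have hc0 : c = 0 := Subtype.ext hc1
    have hc2 : -g c = y₁ - y₂ := congrArg Prod.snd hc
    rw [hc0, map_zero, neg_zero] at hc2
    exact sub_eq_zero.mp hc2.symm
  have hqsurj : Function.Surjective q := by
    intro x
    obtain ⟨p0, rfl⟩ := hπ x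
    exact ⟨S.mkQ (p0, 0), by simp [q]⟩
  have hker : LinearMap.range j = LinearMap.ker q := by
    apply le_antisymm
    · rintro _ ⟨y, rfl⟩
      simp [j, q]
    · rintro z hz
      obtain ⟨⟨a, b⟩, rfl⟩ := S.mkQ_surjective z
      have ha : a ∈ LinearMap.ker π := by
        have : q (S.mkQ (a, b)) = 0 := hz
        simpa [q] using this
      refine ⟨b + g ⟨a, ha⟩, ?_⟩
      show S.mkQ (0, b + g ⟨a, ha⟩) = S.mkQ (a, b)
      rw [Submodule.mkQ_apply, Submodule.mkQ_apply, Submodule.Quotient.eq]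
      refine ⟨-⟨a, ha⟩, ?_⟩
      simp [φ]
  obtain ⟨s, hs⟩ := h ((P × N) ⧸ S) j q hjinj hqsurj hker
  let d : P →ₗ[A] ((P × N) ⧸ S) := S.mkQ ∘ₗ LinearMap.inl A P N - s ∘ₗ π
  have hd : ∀ x : P, d x ∈ LinearMap.range j := by
    intro x
    rw [hker, LinearMap.mem_ker]
    have hsx : q (s (π x)) = π x := LinearMap.ext_iff.mp hs (π x)
    simp [d, q, hsx]
  let e := LinearEquiv.ofInjective j hjinj
  refine ⟨e.symm.toLinearMap ∘ₗ LinearMap.codRestrict (LinearMap.range j) d hd, ?_⟩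
  intro c
  have hπc : π (c : P) = 0 := c.2
  have h1 : d (c : P) = j (g c) := by
    have : d (c : P) = S.mkQ ((c : P), 0) - s (π (c : P)) := rfl
    rw [this, hπc, map_zero, sub_zero]
    show S.mkQ ((c : P), 0) = S.mkQ (0, g c)
    rw [Submodule.mkQ_apply, Submodule.mkQ_apply, Submodule.Quotient.eq]
    exact ⟨c, by simp [φ]⟩
  have h2 : (⟨d (c : P), hd (c : P)⟩ : LinearMap.range j) = e (g c) := by
    apply Subtype.ext
    show d (c : P) = ((e (g c)) : (P × N) ⧸ S)
    rw [h1]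
    exact (LinearEquiv.ofInjective_apply j (g c)).symm
  show e.symm ⟨d (c : P), hd (c : P)⟩ = g c
  rw [h2, LinearEquiv.symm_apply_apply]

lemma extProp_pi {P X N : Type} [AddCommGroup P] [Module A P] [AddCommGroup X]
    [Module A X] [AddCommGroup N] [Module A N] (π : P →ₗ[A] X) (n : ℕ)
    (h : ExtProp π N) : ExtProp π (Fin n → N) := by
  intro g
  choose g' hg' using fun i : Fin n => h ((LinearMap.proj i) ∘ₗ g)
  refine ⟨LinearMap.pi g', fun c => funext fun i => ?_⟩
  simpa using hg' i c

lemma extProp_gen {P X N Z : Type} [AddCommGroup P] [Module A P] [AddCommGroup X]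
    [Module A X] [AddCommGroup N] [Module A N] [AddCommGroup Z] [Module A Z]
    (π : P →ₗ[A] X) (hKproj : Module.Projective A (LinearMap.ker π))
    (hN : ExtProp π N) (hgen : GenBy A N Z) : ExtProp π Z := by
  obtain ⟨n, qq, hq⟩ := hgen
  intro g
  haveI := hKproj
  obtain ⟨h, hh⟩ := Module.projective_lifting_property qq g hq
  obtain ⟨h', hh'⟩ := extProp_pi π n hN h
  refine ⟨qq ∘ₗ h', fun c => ?_⟩
  have : qq (h c) = g c := LinearMap.ext_iff.mp hh c
  simp [hh' c, this]

lemma ext1_of_extProp {P X Z : Type} [AddCommGroup P] [Module A P] [AddCommGroup X]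
    [Module A X] [AddCommGroup Z] [Module A Z] (π : P →ₗ[A] X)
    (hPproj : Module.Projective A P) (hπ : Function.Surjective π)
    (h : ExtProp π Z) : Ext1Vanishes A X Z := by
  intro E _ _ i p hi hp hrange
  haveI := hPproj
  obtain ⟨f, hf⟩ := Module.projective_lifting_property p π hp
  have hfm : ∀ c : (LinearMap.ker π : Submodule A P),
      (f ∘ₗ (LinearMap.ker π).subtype) c ∈ LinearMap.range i := by
    intro c
    rw [hrange, LinearMap.mem_ker]
    have h1 : p (f (c : P)) = π (c : P) := LinearMap.ext_iff.mp hf (c : P)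
    have h2 : π (c : P) = 0 := c.2
    simpa [h2] using h1
  let eZ := LinearEquiv.ofInjective i hi
  let g : (LinearMap.ker π : Submodule A P) →ₗ[A] Z :=
    eZ.symm.toLinearMap ∘ₗ
      LinearMap.codRestrict (LinearMap.range i) (f ∘ₗ (LinearMap.ker π).subtype) hfm
  obtain ⟨g', hg'⟩ := h g
  let u : P →ₗ[A] E := f - i ∘ₗ g'
  have hig : ∀ c : (LinearMap.ker π : Submodule A P), i (g c) = f (c : P) := by
    intro c
    have h3 : eZ (g c) = ⟨f (c : P), hfm c⟩ := by
      show eZ (eZ.symm ⟨f (c : P), hfm c⟩) = ⟨f (c : P), hfm c⟩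
      exact eZ.apply_symm_apply _
    have h4 : (eZ (g c) : E) = i (g c) := LinearEquiv.ofInjective_apply i (g c)
    rw [← h4, h3]
  have hkeru : LinearMap.ker π ≤ LinearMap.ker u := by
    intro x hx
    have h1 : g' x = g ⟨x, hx⟩ := hg' ⟨x, hx⟩
    have h2 : i (g ⟨x, hx⟩) = f x := hig ⟨x, hx⟩
    show u x = 0
    have : u x = f x - i (g' x) := rfl
    rw [this, h1, h2, sub_self]
  let e2 := π.quotKerEquivOfSurjective hπ
  refine ⟨((LinearMap.ker π).liftQ u hkeru) ∘ₗ e2.symm.toLinearMap, ?_⟩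
  apply LinearMap.ext
  intro y
  obtain ⟨x, rfl⟩ := hπ y
  have h5 : e2 (Submodule.Quotient.mk x) = π x := by
    simp [e2, LinearMap.quotKerEquivOfSurjective, LinearEquiv.trans_apply,
      LinearMap.quotKerEquivRange_apply_mk]
  have he : e2.symm (π x) = Submodule.Quotient.mk x := by
    rw [LinearEquiv.symm_apply_eq]
    exact h5.symm
  have hpi : p (i (g' x)) = 0 := by
    have : i (g' x) ∈ LinearMap.ker p := hrange ▸ LinearMap.mem_range_self i (g' x)
    exact this
  have hpf : p (f x) = π x := LinearMap.ext_iff.mp hf x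
  show p (((LinearMap.ker π).liftQ u hkeru) (e2.symm (π x))) = π x
  rw [he, Submodule.liftQ_apply]
  show p (f x - i (g' x)) = π x
  rw [map_sub, hpi, hpf, sub_zero]

/-- The key homological lemma: if `pd X ≤ 1`, `Ext¹(X, N) = 0` and `Z` is generated
by `N`, then `Ext¹(X, Z) = 0`. -/
lemma ext1_of_genBy {X N Z : Type} [AddCommGroup X] [Module A X] [AddCommGroup N]
    [Module A N] [AddCommGroup Z] [Module A Z] (hpd : PdLE1 A X)
    (hext : Ext1Vanishes A X N) (hgen : GenBy A N Z) : Ext1Vanishes A X Z := by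
  obtain ⟨pres⟩ := hpd
  exact ext1_of_extProp pres.p pres.proj pres.surj
    (extProp_gen pres.p pres.ker_proj (extProp_of_ext1 pres.p pres.surj hext) hgen)

end KeyLemmas

lemma stmt9_aux (A : Type) [Ring A] (r : ℕ) (M : Fin r → ModuleCat.{0} A)
    (hind : ∀ i, IndecomposableMod A (M i))
    (hpd : ∀ i, PdLE1 A (M i))
    (hself : ∀ i, Ext1Vanishes A (M i) (M i))
    (hcross : ∀ i j : Fin r, j < i →
      HomZero A (M i) (M j) ∧ Ext1Vanishes A (M i) (M j)) :
    ∀ (l : List (Fin r)) (W : Set (ModuleCat.{0} A)), l.Pairwise (· > ·) →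
      (∀ i ∈ l, M i ∈ W) → IsTauExcSeqRev A W (l.map M) := by
  intro l
  induction l with
  | nil => intro W _ _; trivial
  | cons a tl ih =>
    intro W hpw hmem
    rw [List.pairwise_cons] at hpw
    refine ⟨hmem a List.mem_cons_self, hind a, ?_, ?_⟩
    · intro Y _ hgen
      exact ext1_of_genBy (hpd a) (hself a) hgen
    · refine ih _ hpw.2 ?_
      intro b hb
      have hba : b < a := hpw.1 b hb
      refine ⟨hmem b (List.mem_cons_of_mem a hb), (hcross a b hba).1, ?_⟩
      intro Z _ hgenZ
      exact ext1_of_genBy (hpd a) ((hcross a b hba).2) hgenZ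

/-- Over a finite dimensional algebra `A`, a sequence `(M_1, …, M_r)` of
indecomposable modules with `pd M_i ≤ 1`, `Ext¹(M_i,M_i) = 0`, and
`Hom(M_i,M_j) = 0 = Ext¹(M_i,M_j)` for `j < i`, is a τ-exceptional sequence in `mod A`. -/
theorem stmt9
    (k : Type) [Field k] (A : Type) [Ring A] [Algebra k A] [FiniteDimensional k A]
    (r : ℕ) (M : Fin r → ModuleCat.{0} A)
    (hfg : ∀ i, Module.Finite A (M i))
    (hind : ∀ i, IndecomposableMod A (M i))
    (hpd : ∀ i, PdLE1 A (M i))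
    (hself : ∀ i, Ext1Vanishes A (M i) (M i))
    (hcross : ∀ i j : Fin r, j < i →
      HomZero A (M i) (M j) ∧ Ext1Vanishes A (M i) (M j)) :
    IsTauExcSeq A (fgMods A) (List.ofFn M) := by
  unfold IsTauExcSeq
  have h1 : (List.ofFn M).reverse = ((List.finRange r).reverse).map M := by
    rw [List.ofFn_eq_map, List.map_reverse]
  rw [h1]
  apply stmt9_aux A r M hind hpd hself hcross
  · rw [List.pairwise_reverse]
    simpa using List.pairwise_lt_finRange r
  · intro i _
    exact hfg i
end
end

section
/- Let A be a hereditary finite dimensional algebra and (B, C) an exceptional pair with Ext^1_A(B,C) ≠ 0 and C not projective. Let 0 → C → E → B^r → 0 be a short exact sequence whose class gives a minimal right add(B)-approximation B^r → C[1]. Then Hom_A(B, E) = 0. -/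
open TensorProduct LinearMap

set_option maxHeartbeats 1000000
set_option synthInstance.maxHeartbeats 400000

noncomputable section

section Aux
variable {A : Type} [Ring A]

/-- Factor a linear map through a surjection whose kernel it kills. -/
lemma descend {P X G : Type} [AddCommGroup P] [Module A P] [AddCommGroup X] [Module A X]
    [AddCommGroup G] [Module A G] (π : P →ₗ[A] X) (hπ : Function.Surjective π)
    (τ : P →ₗ[A] G) (h : LinearMap.ker π ≤ LinearMap.ker τ) :
    ∃ s : X →ₗ[A] G, s ∘ₗ π = τ := by
  refine ⟨((LinearMap.ker π).liftQ τ h) ∘ₗ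
    (π.quotKerEquivOfSurjective hπ).symm.toLinearMap, ?_⟩
  ext x
  have h1 : (π.quotKerEquivOfSurjective hπ).symm (π x) = Submodule.Quotient.mk x := by
    rw [LinearEquiv.symm_apply_eq]
    rfl
  simp only [LinearMap.comp_apply, LinearEquiv.coe_coe, h1, Submodule.liftQ_apply]

lemma projective_subfree (hA : ∀ I : Submodule A A, Module.Projective A I) :
    ∀ (n : ℕ) (N : Submodule A (Fin n → A)), Module.Projective A N := by
  intro n
  induction n with
  | zero =>
    intro N
    haveI : Subsingleton (Fin 0 → A) := ⟨fun a b => funext fun i => i.elim0⟩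
    haveI : Subsingleton ↥N := ⟨fun a b => Subtype.ext (funext fun i => i.elim0)⟩
    exact Module.Projective.of_split (0 : ↥N →ₗ[A] (Fin 0 → A)) 0
      (by apply LinearMap.ext; intro x; exact Subsingleton.elim _ _)
  | succ n ih =>
    intro N
    set f : ↥N →ₗ[A] A := (LinearMap.proj (Fin.last n)) ∘ₗ N.subtype with hf
    haveI hIproj : Module.Projective A ↥(LinearMap.range f) := hA _
    obtain ⟨s, hs⟩ := Module.projective_lifting_property f.rangeRestrict LinearMap.id
      f.surjective_rangeRestrict
    -- identify ker f with a submodule of Fin n → A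
    set ρ : ↥(LinearMap.ker f) →ₗ[A] (Fin n → A) :=
      (LinearMap.funLeft A A Fin.castSucc) ∘ₗ N.subtype ∘ₗ (LinearMap.ker f).subtype with hρ
    have hρinj : Function.Injective ρ := by
      intro x y hxy
      have hlast : ∀ z : ↥(LinearMap.ker f), ((z : ↥N) : Fin (n+1) → A) (Fin.last n) = 0 :=
        fun z => z.2
      have hcast : ∀ j : Fin n, ((x : ↥N) : Fin (n+1) → A) j.castSucc
          = ((y : ↥N) : Fin (n+1) → A) j.castSucc := fun j => congrFun hxy j
      ext1; ext1
      funext i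
      refine Fin.lastCases ?_ ?_ i
      · rw [hlast x, hlast y]
      · exact hcast
    haveI hrange : Module.Projective A ↥(LinearMap.range ρ) := ih _
    haveI hkerproj : Module.Projective A ↥(LinearMap.ker f) :=
      Module.Projective.of_equiv (LinearEquiv.ofInjective ρ hρinj).symm
    -- N ≃ ker f × range f
    have hfs : ∀ y : ↥(LinearMap.range f), f (s y) = (y : A) := by
      intro y
      have := congrFun (congrArg (fun g => (DFunLike.coe g)) hs) y
      simpa using congrArg Subtype.val this
    have hmem : ∀ x : ↥N, x - s (f.rangeRestrict x) ∈ LinearMap.ker f := by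
      intro x
      simp only [LinearMap.mem_ker, map_sub, hfs]
      simp [LinearMap.rangeRestrict]
    let β : ↥N →ₗ[A] (↥(LinearMap.ker f) × ↥(LinearMap.range f)) :=
      LinearMap.prod
        (LinearMap.codRestrict (LinearMap.ker f)
          (LinearMap.id - s ∘ₗ f.rangeRestrict) (fun x => hmem x))
        f.rangeRestrict
    let α : (↥(LinearMap.ker f) × ↥(LinearMap.range f)) →ₗ[A] ↥N :=
      LinearMap.coprod (LinearMap.ker f).subtype s
    have hβα : β ∘ₗ α = LinearMap.id := by
      apply LinearMap.ext
      rintro ⟨x, y⟩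
      have hsnd : f.rangeRestrict ((x : ↥N) + s y) = y := by
        apply Subtype.ext
        have : f ((x : ↥N) + s y) = (y : A) := by
          rw [map_add, hfs]
          have hx0 : f (x : ↥N) = 0 := x.2
          rw [hx0, zero_add]
        simpa using this
      show β (α (x, y)) = (x, y)
      apply Prod.ext
      · apply Subtype.ext
        show ((x : ↥N) + s y) - s (f.rangeRestrict ((x : ↥N) + s y)) = (x : ↥N)
        rw [hsnd]
        abel
      · exact hsnd
    have hαβ : α ∘ₗ β = LinearMap.id := by
      apply LinearMap.ext
      intro x
      show (x - s (f.rangeRestrict x)) + s (f.rangeRestrict x) = x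
      abel
    exact Module.Projective.of_equiv
      (LinearEquiv.ofLinear α β hαβ hβα :
        (↥(LinearMap.ker f) × ↥(LinearMap.range f)) ≃ₗ[A] ↥N)

/-- If every short exact sequence `0 → M → G → X → 0` splits, then for any surjection
`π : P → X` every map `ker π → M` extends to `P → M`.  (Pushout construction.) -/
lemma etrivial_of_vanish {X M P : Type} [AddCommGroup X] [Module A X] [AddCommGroup M]
    [Module A M] [AddCommGroup P] [Module A P]
    (π : P →ₗ[A] X) (hπ : Function.Surjective π)
    (hv : Ext1Vanishes A X M) (φ : ↥(LinearMap.ker π) →ₗ[A] M) :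
    ∃ χ : P →ₗ[A] M, ∀ u : ↥(LinearMap.ker π), χ (u : P) = φ u := by
  set nsub : Submodule A (M × P) :=
    LinearMap.range (LinearMap.prod φ (-((LinearMap.ker π).subtype))) with hnsub
  set G := (M × P) ⧸ nsub with hG
  set iG : M →ₗ[A] G := nsub.mkQ ∘ₗ LinearMap.inl A M P with hiG
  have hker : nsub ≤ LinearMap.ker ((0 : M →ₗ[A] X).coprod π) := by
    rintro ⟨m, u⟩ ⟨ω, hω⟩
    have h1 : φ ω = m := congrArg Prod.fst hω
    have h2 : -(ω : P) = u := congrArg Prod.snd hω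
    simp only [LinearMap.mem_ker, LinearMap.coprod_apply, LinearMap.zero_apply, zero_add]
    rw [← h2, map_neg]
    have : π (ω : P) = 0 := ω.2
    rw [this, neg_zero]
  set qG : G →ₗ[A] X := nsub.liftQ ((0 : M →ₗ[A] X).coprod π) hker with hqG
  have hiGinj : Function.Injective iG := by
    intro a b hab
    have : iG (a - b) = 0 := by rw [map_sub, hab, sub_self]
    have hmem : ((a - b, 0) : M × P) ∈ nsub := by
      rwa [hiG, LinearMap.comp_apply, Submodule.mkQ_apply, Submodule.Quotient.mk_eq_zero] at this
    obtain ⟨ω, hω⟩ := hmem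
    have h2 : -(ω : P) = 0 := congrArg Prod.snd hω
    have hω0 : ω = 0 := Subtype.ext (by simpa [neg_eq_zero] using h2)
    have h1 : φ ω = a - b := congrArg Prod.fst hω
    rw [hω0, map_zero] at h1
    exact sub_eq_zero.mp h1.symm
  have hqGsurj : Function.Surjective qG := by
    intro x
    obtain ⟨u, hu⟩ := hπ x
    refine ⟨nsub.mkQ (0, u), ?_⟩
    rw [hqG, Submodule.mkQ_apply, Submodule.liftQ_apply]
    simp [hu]
  have hrange : LinearMap.range iG = LinearMap.ker qG := by
    apply le_antisymm
    · rintro ζ ⟨m, rfl⟩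
      rw [LinearMap.mem_ker, hqG, hiG, LinearMap.comp_apply, Submodule.mkQ_apply,
        Submodule.liftQ_apply]
      simp
    · rintro ζ hζ
      obtain ⟨⟨m, u⟩, rfl⟩ := Submodule.Quotient.mk_surjective nsub ζ
      rw [LinearMap.mem_ker, hqG, Submodule.liftQ_apply] at hζ
      have hu : π u = 0 := by simpa using hζ
      refine ⟨m + φ ⟨u, hu⟩, ?_⟩
      rw [hiG, LinearMap.comp_apply, Submodule.mkQ_apply]
      rw [Submodule.Quotient.eq]
      refine ⟨⟨u, hu⟩, ?_⟩
      apply Prod.ext <;> simp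
  obtain ⟨s, hs⟩ := hv G iG qG hiGinj hqGsurj hrange
  set δ : P →ₗ[A] G := nsub.mkQ ∘ₗ LinearMap.inr A M P - s ∘ₗ π with hδ
  have hδmem : ∀ u : P, δ u ∈ LinearMap.range iG := by
    intro u
    rw [hrange, LinearMap.mem_ker]
    have hsq : qG (s (π u)) = π u := by
      have := congrFun (congrArg (fun g => (DFunLike.coe g)) hs) (π u)
      simpa using this
    rw [hδ]
    simp only [LinearMap.sub_apply, LinearMap.comp_apply, map_sub, hsq, Submodule.mkQ_apply]
    rw [hqG, Submodule.liftQ_apply]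
    simp
  set eiG := LinearEquiv.ofInjective iG hiGinj with heiG
  set ψ : P →ₗ[A] M := eiG.symm.toLinearMap ∘ₗ
    (LinearMap.codRestrict (LinearMap.range iG) δ hδmem) with hψ
  have hψδ : ∀ u : P, iG (ψ u) = δ u := by
    intro u
    have h1 : eiG (ψ u) = (LinearMap.codRestrict (LinearMap.range iG) δ hδmem) u :=
      eiG.apply_symm_apply _
    have h2 := congrArg Subtype.val h1
    rwa [heiG, LinearEquiv.ofInjective_apply] at h2
  refine ⟨ψ, fun u => ?_⟩
  apply hiGinj
  rw [hψδ u]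
  have hs0 : s (π (u : P)) = 0 := by
    have : π (u : P) = 0 := u.2
    rw [this, map_zero]
  rw [hδ]
  simp only [LinearMap.sub_apply, LinearMap.comp_apply, hs0, sub_zero, Submodule.mkQ_apply]
  rw [hiG, LinearMap.comp_apply, Submodule.mkQ_apply, Submodule.Quotient.eq]
  exact ⟨-u, by simp⟩

/-- If `X` has a projective presentation `π : P ↠ X` such that every map `ker π → M`
extends to `P`, then every short exact sequence `0 → M → G → X → 0` splits. -/
lemma vanish_of_presentation {X M P : Type} [AddCommGroup X] [Module A X] [AddCommGroup M]
    [Module A M] [AddCommGroup P] [Module A P] (hP : Module.Projective A P)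
    (π : P →ₗ[A] X) (hπ : Function.Surjective π)
    (hlift : ∀ φ : ↥(LinearMap.ker π) →ₗ[A] M, ∃ χ : P →ₗ[A] M,
      ∀ u : ↥(LinearMap.ker π), χ (u : P) = φ u) :
    Ext1Vanishes A X M := by
  intro G _ _ i' q hi' hq hex
  obtain ⟨lam, hlam⟩ := Module.projective_lifting_property q π hq
  have hlam' : ∀ u : P, q (lam u) = π u := fun u =>
    congrFun (congrArg (fun g => (DFunLike.coe g)) hlam) u
  have hker : ∀ u : ↥(LinearMap.ker π), lam (u : P) ∈ LinearMap.range i' := by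
    intro u
    rw [hex, LinearMap.mem_ker, hlam']
    exact u.2
  set eI := LinearEquiv.ofInjective i' hi' with heI
  set φ : ↥(LinearMap.ker π) →ₗ[A] M := eI.symm.toLinearMap ∘ₗ
    (LinearMap.codRestrict (LinearMap.range i')
      (lam ∘ₗ (LinearMap.ker π).subtype) (fun u => hker u)) with hφ
  have hφ' : ∀ u : ↥(LinearMap.ker π), i' (φ u) = lam (u : P) := by
    intro u
    have h1 : eI (φ u) = (LinearMap.codRestrict (LinearMap.range i')
        (lam ∘ₗ (LinearMap.ker π).subtype) (fun u => hker u)) u := eI.apply_symm_apply _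
    have h2 := congrArg Subtype.val h1
    rwa [heI, LinearEquiv.ofInjective_apply] at h2
  obtain ⟨χ, hχ⟩ := hlift φ
  set τ : P →ₗ[A] G := lam - i' ∘ₗ χ with hτ
  have hkerτ : LinearMap.ker π ≤ LinearMap.ker τ := by
    intro u hu
    rw [LinearMap.mem_ker, hτ, LinearMap.sub_apply, LinearMap.comp_apply]
    rw [hχ ⟨u, hu⟩, hφ' ⟨u, hu⟩]
    exact sub_self _
  obtain ⟨s, hs⟩ := descend π hπ τ hkerτ
  have hs' : ∀ u : P, s (π u) = τ u := fun u =>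
    congrFun (congrArg (fun g => (DFunLike.coe g)) hs) u
  refine ⟨s, ?_⟩
  apply LinearMap.ext
  intro x
  obtain ⟨u, rfl⟩ := hπ x
  have hqi : q (i' (χ u)) = 0 := by
    have : i' (χ u) ∈ LinearMap.ker q := by rw [← hex]; exact ⟨χ u, rfl⟩
    exact this
  rw [LinearMap.comp_apply, hs', hτ, LinearMap.sub_apply, map_sub, LinearMap.comp_apply,
    hqi, sub_zero, hlam', LinearMap.id_apply]

end Aux

/-- Hom(B,C) = 0 for an exceptional pair with Ext¹(B,C) ≠ 0 (Happel–Ringel). -/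
lemma homBC_zero
    (k : Type) [Field k] (A : Type) [Ring A] [Algebra k A]
    (hereditary : ∀ I : Submodule A A, Module.Projective A I)
    (B C : Type)
    [AddCommGroup B] [Module A B] [Module k B] [IsScalarTower k A B] [Module.Finite A B]
    [AddCommGroup C] [Module A C] [Module k C] [IsScalarTower k A C] [Module.Finite A C]
    (hBind : IndecomposableMod A B) (hCind : IndecomposableMod A C)
    (hCend : ∀ f : C →ₗ[A] C, ∃ c : k, ∀ x, f x = c • x)
    (hBrig : Ext1Vanishes A B B) (hCrig : Ext1Vanishes A C C)
    (hExtCB : Ext1Vanishes A C B)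
    (hExtBC : ¬ Ext1Vanishes A B C) :
    HomZero A B C := by
  intro g
  by_contra hg
  by_cases hinj : Function.Injective g
  · -- g is injective: Ext¹(B,C) = 0 via restriction of a presentation of C
    obtain ⟨m, πC, hπC⟩ := Module.Finite.exists_fin' A C
    set P' : Submodule A (Fin m → A) := Submodule.comap πC (LinearMap.range g) with hP'
    haveI hP'proj : Module.Projective A ↥P' := projective_subfree hereditary m P'
    set gB := LinearEquiv.ofInjective g hinj with hgB
    set π' : ↥P' →ₗ[A] B := gB.symm.toLinearMap ∘ₗ
      (LinearMap.codRestrict (LinearMap.range g) (πC ∘ₗ P'.subtype) (fun u => u.2)) with hπ'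
    have hkey : ∀ u : ↥P', g (π' u) = πC (u : Fin m → A) := by
      intro u
      have h1 : gB (π' u) = (LinearMap.codRestrict (LinearMap.range g)
          (πC ∘ₗ P'.subtype) (fun u => u.2)) u := gB.apply_symm_apply _
      have h2 := congrArg Subtype.val h1
      rwa [hgB, LinearEquiv.ofInjective_apply] at h2
    have hπ'surj : Function.Surjective π' := by
      intro b
      obtain ⟨u, hu⟩ := hπC (g b)
      refine ⟨⟨u, by simp [hP', hu]⟩, ?_⟩
      apply hinj
      rw [hkey]
      exact hu
    have hlift : ∀ φ : ↥(LinearMap.ker π') →ₗ[A] C, ∃ χ : ↥P' →ₗ[A] C,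
        ∀ u : ↥(LinearMap.ker π'), χ (u : ↥P') = φ u := by
      intro φ
      have hmem1 : ∀ u : ↥(LinearMap.ker πC), (u : Fin m → A) ∈ P' := by
        intro u
        have : πC (u : Fin m → A) = 0 := u.2
        simp [hP', this]
      set j1 : ↥(LinearMap.ker πC) →ₗ[A] ↥P' :=
        LinearMap.codRestrict P' (LinearMap.ker πC).subtype hmem1 with hj1
      have hmem2 : ∀ u : ↥(LinearMap.ker πC), j1 u ∈ LinearMap.ker π' := by
        intro u
        rw [LinearMap.mem_ker]
        apply hinj
        rw [hkey, map_zero]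
        exact u.2
      set j2 : ↥(LinearMap.ker πC) →ₗ[A] ↥(LinearMap.ker π') :=
        LinearMap.codRestrict (LinearMap.ker π') j1 hmem2 with hj2
      obtain ⟨χhat, hχhat⟩ := etrivial_of_vanish πC hπC hCrig (φ ∘ₗ j2)
      refine ⟨χhat ∘ₗ P'.subtype, ?_⟩
      intro u
      have humem : ((u : ↥P') : Fin m → A) ∈ LinearMap.ker πC := by
        rw [LinearMap.mem_ker]
        rw [← hkey (u : ↥P')]
        have : π' (u : ↥P') = 0 := u.2
        rw [this, map_zero]
      have h3 := hχhat ⟨((u : ↥P') : Fin m → A), humem⟩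
      have h4 : j2 ⟨((u : ↥P') : Fin m → A), humem⟩ = u := by
        apply Subtype.ext; apply Subtype.ext; rfl
      rw [LinearMap.comp_apply, h4] at h3
      exact h3
    exact hExtBC (vanish_of_presentation hP'proj π' hπ'surj hlift)
  · by_cases hsurj : Function.Surjective g
    · -- g surjective: Ext¹(B,C) = 0 by lifting along g
      obtain ⟨n, πB, hπB⟩ := Module.Finite.exists_fin' A B
      haveI hkerproj : Module.Projective A ↥(LinearMap.ker πB) :=
        projective_subfree hereditary n _
      have hlift : ∀ φ : ↥(LinearMap.ker πB) →ₗ[A] C, ∃ χ : (Fin n → A) →ₗ[A] C,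
          ∀ u : ↥(LinearMap.ker πB), χ (u : Fin n → A) = φ u := by
        intro φ
        obtain ⟨φ', hφ'⟩ := Module.projective_lifting_property g φ hsurj
        obtain ⟨χ', hχ'⟩ := etrivial_of_vanish πB hπB hBrig φ'
        refine ⟨g ∘ₗ χ', fun u => ?_⟩
        rw [LinearMap.comp_apply, hχ' u, ← LinearMap.comp_apply, hφ']
      exact hExtBC (vanish_of_presentation inferInstance πB hπB hlift)
    · -- g neither injective nor surjective : Happel–Ringel construction
      set I : Submodule A C := LinearMap.range g with hI
      have hQne : ∃ c : C, I.mkQ c ≠ 0 := by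
        by_contra hall
        push_neg at hall
        apply hsurj
        rw [← LinearMap.range_eq_top, ← hI]
        rw [Submodule.eq_top_iff']
        intro c
        have := hall c
        rwa [Submodule.mkQ_apply, Submodule.Quotient.mk_eq_zero] at this
      haveI : Module.Finite A (C ⧸ I) :=
        Module.Finite.of_surjective I.mkQ (Submodule.mkQ_surjective I)
      obtain ⟨nQ, πQ, hπQ⟩ := Module.Finite.exists_fin' A (C ⧸ I)
      haveI hΩQproj : Module.Projective A ↥(LinearMap.ker πQ) :=
        projective_subfree hereditary nQ _
      obtain ⟨ψ, hψc⟩ := Module.projective_lifting_property I.mkQ πQ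
        (Submodule.mkQ_surjective I)
      have hψ : ∀ u, I.mkQ (ψ u) = πQ u := fun u =>
        congrFun (congrArg (fun h => (DFunLike.coe h)) hψc) u
      have hmemI : ∀ u : ↥(LinearMap.ker πQ), ψ (u : Fin nQ → A) ∈ I := by
        intro u
        have h0 : I.mkQ (ψ (u : Fin nQ → A)) = 0 := by rw [hψ]; exact u.2
        rwa [Submodule.mkQ_apply, Submodule.Quotient.mk_eq_zero] at h0
      obtain ⟨φ', hφ'c⟩ := Module.projective_lifting_property g.rangeRestrict
        (LinearMap.codRestrict (LinearMap.range g)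
          (ψ ∘ₗ (LinearMap.ker πQ).subtype) (fun u => hmemI u))
        g.surjective_rangeRestrict
      have hgφ' : ∀ u : ↥(LinearMap.ker πQ), g (φ' u) = ψ (u : Fin nQ → A) := by
        intro u
        have := congrFun (congrArg (fun h => (DFunLike.coe h)) hφ'c) u
        exact congrArg Subtype.val this
      -- the extension Z of Q by B with class lifting that of 0 → I → C → Q → 0
      set nsub : Submodule A (B × (Fin nQ → A)) :=
        LinearMap.range (LinearMap.prod φ' (-(LinearMap.ker πQ).subtype)) with hnsub
      set Z := (B × (Fin nQ → A)) ⧸ nsub with hZ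
      set v : B →ₗ[A] Z := nsub.mkQ ∘ₗ LinearMap.inl A B (Fin nQ → A) with hv
      have hkz : nsub ≤ LinearMap.ker (g.coprod ψ) := by
        rintro ⟨b, u⟩ ⟨ω, hω⟩
        have h1 : φ' ω = b := congrArg Prod.fst hω
        have h2 : -(ω : Fin nQ → A) = u := congrArg Prod.snd hω
        rw [LinearMap.mem_ker, LinearMap.coprod_apply, ← h1, ← h2, map_neg, hgφ']
        exact add_neg_cancel _
      set z : Z →ₗ[A] C := nsub.liftQ (g.coprod ψ) hkz with hz
      have hkw : nsub ≤ LinearMap.ker ((0 : B →ₗ[A] (C ⧸ I)).coprod πQ) := by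
        rintro ⟨b, u⟩ ⟨ω, hω⟩
        have h2 : -(ω : Fin nQ → A) = u := congrArg Prod.snd hω
        have hπω : πQ (ω : Fin nQ → A) = 0 := ω.2
        simp only [LinearMap.mem_ker, LinearMap.coprod_apply, LinearMap.zero_apply,
          zero_add, ← h2, map_neg, hπω, neg_zero]
      set w : Z →ₗ[A] (C ⧸ I) := nsub.liftQ
        ((0 : B →ₗ[A] (C ⧸ I)).coprod πQ) hkw with hw
      have hvinj : Function.Injective v := by
        intro a b hab
        have h0 : v (a - b) = 0 := by rw [map_sub, hab, sub_self]
        have hmem : ((a - b, 0) : B × (Fin nQ → A)) ∈ nsub := by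
          rwa [hv, LinearMap.comp_apply, Submodule.mkQ_apply,
            Submodule.Quotient.mk_eq_zero] at h0
        obtain ⟨ω, hω⟩ := hmem
        have h2 : -(ω : Fin nQ → A) = 0 := congrArg Prod.snd hω
        have hω0 : ω = 0 := Subtype.ext (by simpa [neg_eq_zero] using h2)
        have h1 : φ' ω = a - b := congrArg Prod.fst hω
        rw [hω0, map_zero] at h1
        exact sub_eq_zero.mp h1.symm
      have hzv : ∀ b : B, z (v b) = g b := by
        intro b
        rw [hv, LinearMap.comp_apply, Submodule.mkQ_apply, hz, Submodule.liftQ_apply]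
        simp
      have hπz : ∀ ζ : Z, I.mkQ (z ζ) = w ζ := by
        intro ζ
        obtain ⟨⟨b, u⟩, rfl⟩ := Submodule.Quotient.mk_surjective nsub ζ
        rw [hz, hw, Submodule.liftQ_apply, Submodule.liftQ_apply]
        simp only [LinearMap.coprod_apply, LinearMap.zero_apply, zero_add, map_add]
        have hgb : I.mkQ (g b) = 0 := by
          rw [Submodule.mkQ_apply, Submodule.Quotient.mk_eq_zero]; exact ⟨b, rfl⟩
        rw [hgb, zero_add, hψ]
      have hkerw : ∀ ζ : Z, w ζ = 0 → ∃ b : B, v b = ζ := by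
        intro ζ hζ
        obtain ⟨⟨b, u⟩, rfl⟩ := Submodule.Quotient.mk_surjective nsub ζ
        rw [hw, Submodule.liftQ_apply] at hζ
        have hu : πQ u = 0 := by simpa using hζ
        refine ⟨b + φ' ⟨u, hu⟩, ?_⟩
        rw [hv, LinearMap.comp_apply, Submodule.mkQ_apply, Submodule.Quotient.eq]
        refine ⟨⟨u, hu⟩, ?_⟩
        apply Prod.ext <;> simp
      -- the pullback W of Z → Q ← C
      set W : Submodule A (C × Z) := LinearMap.ker
        ((I.mkQ ∘ₗ LinearMap.fst A C Z) - (w ∘ₗ LinearMap.snd A C Z)) with hW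
      have hmemW : ∀ x : C × Z, x ∈ W ↔ I.mkQ x.1 = w x.2 := by
        intro x
        rw [hW, LinearMap.mem_ker, LinearMap.sub_apply, LinearMap.comp_apply,
          LinearMap.comp_apply, sub_eq_zero]
        exact Iff.rfl
      set vW : B →ₗ[A] ↥W := LinearMap.codRestrict W
        (LinearMap.prod (0 : B →ₗ[A] C) v)
        (fun b => by
          rw [hmemW]
          show I.mkQ 0 = w (v b)
          rw [map_zero, ← hπz, hzv]
          symm
          rw [Submodule.mkQ_apply, Submodule.Quotient.mk_eq_zero]
          exact ⟨b, rfl⟩) with hvW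
      set pW : ↥W →ₗ[A] C := LinearMap.fst A C Z ∘ₗ W.subtype with hpW
      have hvWinj : Function.Injective vW := by
        intro a b hab
        apply hvinj
        have := congrArg (fun x : ↥W => (x : C × Z).2) hab
        exact this
      have hpWsurj : Function.Surjective pW := by
        intro c
        obtain ⟨u, hu⟩ := hπQ (I.mkQ c)
        refine ⟨⟨(c, nsub.mkQ (0, u)), ?_⟩, rfl⟩
        rw [hmemW]
        show I.mkQ c = w (nsub.mkQ (0, u))
        have hwu : w (nsub.mkQ (0, u)) = πQ u := by
          rw [Submodule.mkQ_apply, hw, Submodule.liftQ_apply]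
          simp
        rw [hwu, hu]
      have hexW : LinearMap.range vW = LinearMap.ker pW := by
        apply le_antisymm
        · rintro x ⟨b, rfl⟩
          rw [LinearMap.mem_ker]
          rfl
        · rintro x hx
          have hx1 : (x : C × Z).1 = 0 := hx
          have hx2 : w (x : C × Z).2 = 0 := by
            have := (hmemW (x : C × Z)).mp x.2
            rw [hx1, map_zero] at this
            exact this.symm
          obtain ⟨b, hb⟩ := hkerw _ hx2
          refine ⟨b, ?_⟩
          apply Subtype.ext
          apply Prod.ext
          · exact hx1.symm
          · exact hb
      obtain ⟨s, hsc⟩ := hExtCB (↥W) vW pW hvWinj hpWsurj hexW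
      have hs : ∀ c : C, ((s c : C × Z)).1 = c := fun c =>
        congrFun (congrArg (fun h => (DFunLike.coe h)) hsc) c
      set σ : C →ₗ[A] Z := LinearMap.snd A C Z ∘ₗ W.subtype ∘ₗ s with hσdef
      have hσ : ∀ x : C, I.mkQ (z (σ x)) = I.mkQ x := by
        intro x
        have hmem := (hmemW ((s x : C × Z))).mp (s x).2
        rw [hs x] at hmem
        rw [hπz]
        exact hmem.symm
      obtain ⟨c₀, hc₀⟩ := hCend (z ∘ₗ σ)
      have hzσ : ∀ x : C, z (σ x) = x := by
        have h1 : ∀ x : C, I.mkQ x = algebraMap k A c₀ • I.mkQ x := by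
          intro x
          have h2 : z (σ x) = c₀ • x := hc₀ x
          have h3 : (c₀ : k) • x = (algebraMap k A c₀) • x := (algebraMap_smul A c₀ x).symm
          calc I.mkQ x = I.mkQ (z (σ x)) := (hσ x).symm
            _ = I.mkQ (c₀ • x) := by rw [h2]
            _ = I.mkQ ((algebraMap k A c₀) • x) := by rw [← h3]
            _ = algebraMap k A c₀ • I.mkQ x := map_smul _ _ _
        by_cases hc1 : c₀ = 1
        · intro x
          have := hc₀ x
          rwa [hc1, one_smul] at this
        · exfalso
          obtain ⟨c, hc⟩ := hQne
          apply hc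
          have h4 : (1 - algebraMap k A c₀) • I.mkQ c = 0 := by
            rw [sub_smul, one_smul, ← h1 c, sub_self]
          have h5 : (1 : A) - algebraMap k A c₀ = algebraMap k A (1 - c₀) := by
            rw [map_sub, map_one]
          have h6 : algebraMap k A ((1 - c₀)⁻¹) • ((algebraMap k A (1 - c₀)) • I.mkQ c)
              = I.mkQ c := by
            rw [smul_smul, ← map_mul, inv_mul_cancel₀ (sub_ne_zero.mpr (Ne.symm hc1)),
              map_one, one_smul]
          rw [← h6, ← h5, h4, smul_zero]
      -- the idempotent on B
      set d : B →ₗ[A] Z := v - σ ∘ₗ g with hd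
      have hdmem : ∀ b : B, d b ∈ LinearMap.range v := by
        intro b
        have hzd : z (d b) = 0 := by
          rw [hd, LinearMap.sub_apply, map_sub, hzv, LinearMap.comp_apply, hzσ, sub_self]
        have hwd : w (d b) = 0 := by
          rw [← hπz, hzd, map_zero]
        obtain ⟨b', hb'⟩ := hkerw _ hwd
        exact ⟨b', hb'⟩
      set eqv := LinearEquiv.ofInjective v hvinj with heqv
      set e : B →ₗ[A] B := eqv.symm.toLinearMap ∘ₗ
        LinearMap.codRestrict (LinearMap.range v) d hdmem with he
      have hev : ∀ b : B, v (e b) = d b := by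
        intro b
        have h1 : eqv (e b) = (LinearMap.codRestrict (LinearMap.range v) d hdmem) b :=
          eqv.apply_symm_apply _
        have h2 := congrArg Subtype.val h1
        rwa [heqv, LinearEquiv.ofInjective_apply] at h2
      have hge : ∀ b : B, g (e b) = 0 := by
        intro b
        rw [← hzv, hev, hd, LinearMap.sub_apply, map_sub, hzv, LinearMap.comp_apply,
          hzσ, sub_self]
      have hfix : ∀ b : B, g b = 0 → e b = b := by
        intro b hb
        apply hvinj
        have h7 : (σ ∘ₗ g) b = 0 := by rw [LinearMap.comp_apply, hb, map_zero]
        rw [hev, hd, LinearMap.sub_apply, h7, sub_zero]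
      have hee : e ∘ₗ e = e := by
        apply LinearMap.ext
        intro b
        exact hfix (e b) (hge b)
      rcases hBind.2 e hee with he0 | he1
      · apply hinj
        intro a b hab
        have h0 : g (a - b) = 0 := by rw [map_sub, hab, sub_self]
        have := hfix (a - b) h0
        rw [he0] at this
        simpa [sub_eq_zero] using this.symm
      · apply hg
        apply LinearMap.ext
        intro b
        have : e b = b := by rw [he1]; rfl
        rw [← this, hge b, LinearMap.zero_apply]

/-- Let `A` be hereditary, `(B, C)` an exceptional pair with
`Ext¹(B,C) ≠ 0` and `C` not projective, and let `0 → C → E → B^r → 0` be a short exact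
sequence which is a minimal right `add B`-approximation `B^r → C[1]` (i.e. a minimal
universal extension).  Then `Hom_A(B, E) = 0`. -/
theorem stmt17
    (k : Type) [Field k] (A : Type) [Ring A] [Algebra k A] [FiniteDimensional k A]
    (hereditary : ∀ I : Submodule A A, Module.Projective A I)
    (B C : Type)
    [AddCommGroup B] [Module A B] [Module k B] [IsScalarTower k A B] [Module.Finite A B]
    [AddCommGroup C] [Module A C] [Module k C] [IsScalarTower k A C] [Module.Finite A C]
    (hBind : IndecomposableMod A B) (hCind : IndecomposableMod A C)
    (hBend : ∀ f : B →ₗ[A] B, ∃ c : k, ∀ x, f x = c • x)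
    (hCend : ∀ f : C →ₗ[A] C, ∃ c : k, ∀ x, f x = c • x)
    (hBrig : Ext1Vanishes A B B) (hCrig : Ext1Vanishes A C C)
    (hHomCB : HomZero A C B) (hExtCB : Ext1Vanishes A C B)
    (hExtBC : ¬ Ext1Vanishes A B C)
    (hCnotproj : ¬ Module.Projective A C)
    (E : Type) [AddCommGroup E] [Module A E]
    (r : ℕ)
    (i : C →ₗ[A] E) (p : E →ₗ[A] (Fin r → B))
    (hi : Function.Injective i) (hp : Function.Surjective p)
    (hex : LinearMap.range i = LinearMap.ker p)
    -- the class of the sequence is a right `add B`-approximation of `C[1]`: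
    -- every extension of `B` by `C` is a pullback of it
    (happrox : ∀ (G : Type) [AddCommGroup G] [Module A G],
      ∀ (i' : C →ₗ[A] G) (q : G →ₗ[A] B),
        Function.Injective i' → Function.Surjective q → LinearMap.range i' = LinearMap.ker q →
        ∃ (h : B →ₗ[A] (Fin r → B)) (Φ : G →ₗ[A] E), p ∘ₗ Φ = h ∘ₗ q ∧ Φ ∘ₗ i' = i)
    -- minimality of the approximation
    (hmin : ∀ γ : (Fin r → B) →ₗ[A] (Fin r → B),
      (∃ Φ : E →ₗ[A] E, p ∘ₗ Φ = γ ∘ₗ p ∧ Φ ∘ₗ i = i) → Function.Bijective γ) :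
    HomZero A B E := by
  intro f
  have hc : ∀ l : Fin r, ∃ cl : k, ∀ x : B, (p (f x)) l = cl • x := by
    intro l
    obtain ⟨cl, hcl⟩ := hBend ((LinearMap.proj l) ∘ₗ (p ∘ₗ f))
    exact ⟨cl, fun x => hcl x⟩
  choose c hcspec using hc
  have hpf0 : p ∘ₗ f = 0 := by
    by_contra hne
    have hex0 : ∃ j, c j ≠ 0 := by
      by_contra hall
      push_neg at hall
      apply hne
      apply LinearMap.ext
      intro x
      funext l
      show (p (f x)) l = 0
      rw [hcspec l x, hall l, zero_smul]
    obtain ⟨j, hj⟩ := hex0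
    set a : A := algebraMap k A (c j)⁻¹ with ha
    set μ : B →ₗ[A] B :=
      { toFun := fun x => a • x
        map_add' := fun x y => smul_add a x y
        map_smul' := fun s x => by
          simp only [RingHom.id_apply]
          rw [smul_smul, smul_smul, ha, Algebra.commutes] } with hμ
    set Φ : E →ₗ[A] E := LinearMap.id - f ∘ₗ μ ∘ₗ (LinearMap.proj j) ∘ₗ p with hΦ
    set γ : (Fin r → B) →ₗ[A] (Fin r → B) :=
      LinearMap.id - (p ∘ₗ f) ∘ₗ μ ∘ₗ (LinearMap.proj j) with hγ
    have hpi : ∀ cc : C, p (i cc) = 0 := by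
      intro cc
      have : i cc ∈ LinearMap.ker p := by rw [← hex]; exact ⟨cc, rfl⟩
      exact this
    have h1 : p ∘ₗ Φ = γ ∘ₗ p := by
      apply LinearMap.ext
      intro x
      show p (Φ x) = γ (p x)
      rw [hΦ, hγ]
      simp only [LinearMap.sub_apply, LinearMap.comp_apply, LinearMap.id_apply, map_sub]
    have h2 : Φ ∘ₗ i = i := by
      apply LinearMap.ext
      intro cc
      show Φ (i cc) = i cc
      rw [hΦ]
      simp only [LinearMap.sub_apply, LinearMap.comp_apply, LinearMap.id_apply, hpi cc]
      show i cc - f (μ ((0 : Fin r → B) j)) = i cc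
      simp only [Pi.zero_apply, map_zero, sub_zero]
    have hbij := hmin γ ⟨Φ, h1, h2⟩
    haveI : Nontrivial B := hBind.1
    obtain ⟨b0, hb0⟩ := exists_ne (0 : B)
    obtain ⟨x, hx⟩ := hbij.2 (Pi.single j b0)
    have hxj : γ x j = 0 := by
      have h5 : γ x j = x j - (p (f (μ (x j)))) j := by
        rw [hγ]
        simp only [LinearMap.sub_apply, LinearMap.comp_apply, LinearMap.id_apply,
          Pi.sub_apply, LinearMap.proj_apply]
      rw [h5]
      have h3 : (p (f (μ (x j)))) j = c j • (a • x j) := hcspec j (μ (x j))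
      rw [h3]
      have h4 : c j • (a • x j) = x j := by
        rw [← algebraMap_smul A (c j) (a • x j), smul_smul, ha, ← map_mul,
          mul_inv_cancel₀ hj, map_one, one_smul]
      rw [h4, sub_self]
    rw [hx, Pi.single_eq_same] at hxj
    exact hb0 hxj
  have hmem : ∀ b : B, f b ∈ LinearMap.range i := by
    intro b
    rw [hex, LinearMap.mem_ker]
    exact congrFun (congrArg (fun h => (DFunLike.coe h)) hpf0) b
  set eqi := LinearEquiv.ofInjective i hi with heqi
  set g : B →ₗ[A] C := eqi.symm.toLinearMap ∘ₗ
    LinearMap.codRestrict (LinearMap.range i) f hmem with hgdef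
  have hig : ∀ b : B, i (g b) = f b := by
    intro b
    have h1 : eqi (g b) = (LinearMap.codRestrict (LinearMap.range i) f hmem) b :=
      eqi.apply_symm_apply _
    have h2 := congrArg Subtype.val h1
    rwa [heqi, LinearEquiv.ofInjective_apply] at h2
  have hg0 : g = 0 := homBC_zero k A hereditary B C hBind hCind hCend hBrig hCrig
    hExtCB hExtBC g
  apply LinearMap.ext
  intro b
  rw [LinearMap.zero_apply, ← hig b, hg0, LinearMap.zero_apply, map_zero]
end
end
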